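/- arXiv:2305.08442 — 6 statements merged into one kernel-verified Lean document; each statement's English description precedes it below -/
import Mathlib

section
/- Let H be a graph on n vertices that is a crown on n vertices (with any number k of spikes). Then the square H² of H contains a Hamilton cycle. -/
open scoped Classical

/-- The square of a graph: two distinct vertices are adjacent iff their distance in `H`
is at most two, i.e. they are adjacent in `H` or have a common neighbor. -/
def SimpleGraph.square {V : Type*} (G : SimpleGraph V) : SimpleGraph V where
  Adj u v := u ≠ v ∧ (G.Adj u v ∨ ∃ w, G.Adj u w ∧ G.Adj w v)
  symm := ⟨by
    rintro u v ⟨h1, h2⟩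
    refine ⟨h1.symm, ?_⟩
    rcases h2 with h | ⟨w, hw1, hw2⟩
    · exact Or.inl h.symm
    · exact Or.inr ⟨w, hw2.symm, hw1.symm⟩⟩
  loopless := ⟨fun v h => h.1 rfl⟩

/-- `H` is a crown on its whole (finite) vertex set, with `k` spikes: `H` is the edge-disjoint
union of a cycle `c` and a matching `M` of size `k`, each matching edge having exactly one vertex
in common with the cycle, and every vertex lying on the cycle or on a matching edge. -/
def IsCrown {V : Type*} (H : SimpleGraph V) (k : ℕ) : Prop :=
  ∃ (v : V) (c : H.Walk v v) (M : Finset (Sym2 V)),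
    c.IsCycle ∧ M.card = k ∧
    (∀ e ∈ M, ∀ f ∈ M, e ≠ f → ∀ x : V, x ∈ e → x ∉ f) ∧
    (∀ e ∈ M, e ∉ c.edges) ∧
    (∀ e ∈ M, ∃! x : V, x ∈ e ∧ x ∈ c.support) ∧
    (∀ e : Sym2 V, e ∈ H.edgeSet ↔ (e ∈ c.edges ∨ e ∈ M)) ∧
    (∀ x : V, x ∈ c.support ∨ ∃ e ∈ M, x ∈ e)

/-!
Walk once around the cycle of the crown and, at every cycle vertex `x` carrying a spike `x s`,
step out to the tip `s` and from there straight on to the successor of `x`, which is at distance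
two from `s`. Every vertex is visited exactly once, so this closed walk in `H²` is a Hamilton
cycle.
-/

theorem List.nodup_flatMap_cons_toList {α : Type*} {l : List α} {f : α → Option α}
    (hl : l.Nodup) (hoff : ∀ x s, f x = some s → s ∉ l)
    (hinj : ∀ x y s, f x = some s → f y = some s → x = y) :
    (l.flatMap fun x => x :: (f x).toList).Nodup := by
  refine List.nodup_flatMap.2 ⟨fun x hx => ?_, hl.imp_of_mem fun {x y} hx hy hxy => ?_⟩
  · rcases hfx : f x with _ | s
    · simp
    · simpa using fun hxs : x = s => hoff x s hfx (hxs ▸ hx)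
  · refine List.disjoint_left.2 fun a hax hay => ?_
    simp only [List.mem_cons, Option.mem_toList] at hax hay
    rcases hax with rfl | hxa <;> rcases hay with rfl | hya
    · exact hxy rfl
    · exact hoff y a hya hx
    · exact hoff x a hxa hy
    · exact hxy (hinj x y a hxa hya)

namespace SimpleGraph

variable {V : Type*} {G : SimpleGraph V} {u v w : V}

theorem le_square : G ≤ G.square := fun _ _ h => ⟨h.ne, Or.inl h⟩

theorem square_adj_of_adj_of_adj (hne : u ≠ w) (h₁ : G.Adj u v) (h₂ : G.Adj v w) :
    G.square.Adj u w :=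
  ⟨hne, Or.inr ⟨v, h₁, h₂⟩⟩

namespace Walk

theorem isCycle_of_support_tail_nodup {p : G.Walk u u} (hlen : 3 ≤ p.length)
    (hnodup : p.support.tail.Nodup) : p.IsCycle := by
  cases p with
  | nil => simp at hlen
  | cons h q =>
    have hq : q.IsPath := IsPath.mk' (by simpa using hnodup)
    refine (cons_isCycle_iff q h).2 ⟨hq, fun he => ?_⟩
    have hq1 := hq.length_eq_one_of_mem_edges (Sym2.eq_swap ▸ he)
    simp only [length_cons] at hlen
    omega

theorem exists_square_walk_support_eq_flatMap (spike : V → Option V)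
    (hadj : ∀ x s, spike x = some s → G.Adj x s) :
    ∀ {u v : V} (p : G.Walk u v), (∀ x s, spike x = some s → s ∉ p.support) →
      ∃ q : G.square.Walk u v,
        q.support = (p.support.dropLast.flatMap fun x => x :: (spike x).toList) ++ [v]
  | _, _, nil, _ => ⟨nil, rfl⟩
  | u, _, cons (v := w) h p, hoff => by
    obtain ⟨q, hq⟩ := exists_square_walk_support_eq_flatMap spike hadj p
      fun x s hs hsp => hoff x s hs (by simp [hsp])
    have hdrop : (u :: p.support).dropLast = u :: p.support.dropLast :=
      List.dropLast_cons_of_ne_nil p.support_ne_nil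
    rcases hus : spike u with _ | s
    · exact ⟨cons (le_square h) q, by simp [support_cons, hdrop, hus, hq]⟩
    · have hsw : s ≠ w := fun hsw => hoff u s hus (by simp [hsw])
      refine ⟨cons (le_square (hadj u s hus))
        (cons (square_adj_of_adj_of_adj hsw (hadj u s hus).symm h) q), ?_⟩
      simp [support_cons, hdrop, hus, hq]

theorem mem_support_dropLast_of_mem_support {c : G.Walk v v} (hc : ¬c.Nil) {x : V}
    (hx : x ∈ c.support) : x ∈ c.support.dropLast := by
  rcases (mem_support_iff c).1 hx with rfl | hx
  · exact c.tail_support_perm_dropLast_support.subset (end_mem_tail_support hc)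
  · exact c.tail_support_perm_dropLast_support.subset hx

/-- `spike x = some s` records a spike `x s` hanging at the cycle vertex `x`. -/
structure IsSpikeAssignment (c : G.Walk v v) (spike : V → Option V) : Prop where
  adj : ∀ x s, spike x = some s → G.Adj x s
  notMem_support : ∀ x s, spike x = some s → s ∉ c.support
  injective : ∀ x y s, spike x = some s → spike y = some s → x = y
  exists_of_notMem_support : ∀ y, y ∉ c.support → ∃ x ∈ c.support, spike x = some y

theorem IsSpikeAssignment.exists_isHamiltonianCycle_square [DecidableEq V] {c : G.Walk v v}
    {spike : V → Option V} (hc : c.IsCycle) (hs : IsSpikeAssignment c spike) :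
    ∃ (u : V) (q : G.square.Walk u u), q.IsHamiltonianCycle := by
  obtain ⟨q, hq⟩ := exists_square_walk_support_eq_flatMap spike hs.adj c hs.notMem_support
  set L := c.support.dropLast.flatMap fun x => x :: (spike x).toList
  have hperm : q.support.tail.Perm L :=
    q.tail_support_perm_dropLast_support.trans (.of_eq (by rw [hq, List.dropLast_concat]))
  have hdrop : c.support.dropLast.Nodup := hc.nodup_dropLast_support
  have hnodup : L.Nodup := List.nodup_flatMap_cons_toList hdrop
    (fun x s hsx hmem => hs.notMem_support x s hsx (List.mem_of_mem_dropLast hmem)) hs.injective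
  have hmem : ∀ y, y ∈ L := by
    intro y
    have hcycle : ∀ {x}, x ∈ c.support → x ∈ c.support.dropLast :=
      mem_support_dropLast_of_mem_support hc.not_nil
    by_cases hy : y ∈ c.support
    · exact List.mem_flatMap.2 ⟨y, hcycle hy, by simp⟩
    · obtain ⟨x, hx, hxy⟩ := hs.exists_of_notMem_support y hy
      exact List.mem_flatMap.2 ⟨x, hcycle hx, by simp [hxy]⟩
  have hlen : 3 ≤ q.length := by
    have hsub : c.support.dropLast.Subperm L :=
      List.subperm_of_subset hdrop fun x _ => hmem x
    have hqL : q.length + 1 = L.length + 1 := by simpa using congrArg List.length hq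
    have hcL : c.support.dropLast.length = c.length := by simp
    have := hsub.length_le
    have := hc.three_le_length
    omega
  refine ⟨v, q, isHamiltonianCycle_iff_isCycle_and_support_count_tail_eq_one.2
    ⟨isCycle_of_support_tail_nodup hlen (hperm.nodup_iff.2 hnodup), fun y => ?_⟩⟩
  rw [hperm.count_eq]
  exact List.count_eq_one_of_mem hnodup (hmem y)

noncomputable def matchingSpike (c : G.Walk v v) (M : Finset (Sym2 V)) (x : V) : Option V :=
  if h : x ∈ c.support ∧ ∃ s, s(x, s) ∈ M then some h.2.choose else none

theorem matchingSpike_eq_some {c : G.Walk v v} {M : Finset (Sym2 V)} {x s : V}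
    (h : c.matchingSpike M x = some s) : x ∈ c.support ∧ s(x, s) ∈ M := by
  unfold matchingSpike at h
  split_ifs at h with hx
  cases h
  exact ⟨hx.1, hx.2.choose_spec⟩

theorem matchingSpike_eq_some_of_mem {c : G.Walk v v} {M : Finset (Sym2 V)}
    (hM : ∀ x y z, s(x, y) ∈ M → s(x, z) ∈ M → y = z) {x s : V} (hx : x ∈ c.support)
    (hs : s(x, s) ∈ M) : c.matchingSpike M x = some s := by
  have h : x ∈ c.support ∧ ∃ s, s(x, s) ∈ M := ⟨hx, s, hs⟩
  rw [matchingSpike, dif_pos h, hM x _ s h.2.choose_spec hs]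

end Walk

end SimpleGraph

open SimpleGraph Walk in
theorem IsCrown.exists_isCycle_isSpikeAssignment {V : Type*} {H : SimpleGraph V} {k : ℕ}
    (hH : IsCrown H k) :
    ∃ (v : V) (c : H.Walk v v) (spike : V → Option V),
      c.IsCycle ∧ c.IsSpikeAssignment spike := by
  obtain ⟨v, c, M, hc, -, hdisj, -, hone, hedge, hcover⟩ := hH
  have hmatch : ∀ x y z, s(x, y) ∈ M → s(x, z) ∈ M → y = z := by
    intro x y z hy hz
    by_contra hyz
    exact hdisj _ hy _ hz (fun h => hyz (Sym2.congr_right.1 h)) x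
      (Sym2.mem_mk_left x y) (Sym2.mem_mk_left x z)
  have hadj : ∀ {x y}, s(x, y) ∈ M → H.Adj x y := fun h => (hedge _).2 (Or.inr h)
  have honce : ∀ {e x y}, e ∈ M → x ∈ e → x ∈ c.support →
      y ∈ e → y ∈ c.support → x = y :=
    fun he hx hxc hy hyc => (hone _ he).unique ⟨hx, hxc⟩ ⟨hy, hyc⟩
  refine ⟨v, c, c.matchingSpike M, hc,
    ⟨fun x s h => hadj (matchingSpike_eq_some h).2, ?_, ?_, ?_⟩⟩
  · intro x s h hs
    obtain ⟨hx, hM⟩ := matchingSpike_eq_some h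
    exact (hadj hM).ne (honce hM (Sym2.mem_mk_left x s) hx (Sym2.mem_mk_right x s) hs)
  · intro x y s hx hy
    obtain ⟨hxc, hxM⟩ := matchingSpike_eq_some hx
    obtain ⟨hyc, hyM⟩ := matchingSpike_eq_some hy
    rw [Sym2.eq_swap] at hxM hyM
    obtain rfl := hmatch _ _ _ hxM hyM
    exact honce hxM (Sym2.mem_mk_right s x) hxc (Sym2.mem_mk_right s x) hyc
  · intro y hy
    obtain ⟨e, he, hye⟩ := (hcover y).resolve_left hy
    obtain ⟨x, ⟨hxe, hxc⟩, -⟩ := hone e he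
    have hxy : x ≠ y := by rintro rfl; exact hy hxc
    rw [(Sym2.mem_and_mem_iff hxy).1 ⟨hxe, hye⟩] at he
    exact ⟨x, hxc, matchingSpike_eq_some_of_mem hmatch hxc he⟩

theorem square_of_crown_hamiltonian_general {V : Type*} [DecidableEq V]
    (H : SimpleGraph V) (k : ℕ) (hH : IsCrown H k) :
    ∃ (v : V) (c : H.square.Walk v v), c.IsHamiltonianCycle := by
  obtain ⟨v, c, spike, hc, hs⟩ := hH.exists_isCycle_isSpikeAssignment
  exact hs.exists_isHamiltonianCycle_square hc

/-- If `H` is a crown on its `n` vertices (with any number `k` of spikes), then the square `H²`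
of `H` contains a Hamilton cycle. -/
theorem square_of_crown_hamiltonian {V : Type*} [Fintype V] [DecidableEq V]
    (H : SimpleGraph V) (k : ℕ) (hH : IsCrown H k) :
    ∃ (v : V) (c : H.square.Walk v v), c.IsHamiltonianCycle :=
  square_of_crown_hamiltonian_general H k hH
end

section
/- Let δ = 0.001 and let G be an (n,d,λ)-graph with λ ≤ δd. Let S ⊆ V(G) be such that every vertex v ∈ V(G) has at least d₁ neighbors in S, where d₁ ≥ 2δd. Then every subset X ⊆ V(G) with |X| ≤ δn satisfies |Γ(X,S)| ≥ (d₁/(2δd))·|X|. -/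
open scoped Classical

/-- An `(n,d,λ)`-graph: a `d`-regular graph on `n` vertices such that all eigenvalues of its
adjacency matrix except the largest one (which equals `d`) are at most `lam` in absolute value. -/
def IsNDLGraph (n : ℕ) (G : SimpleGraph (Fin n)) (d : ℕ) (lam : ℝ) : Prop :=
  G.IsRegularOfDegree d ∧
  ∃ (h : (G.adjMatrix ℝ).IsHermitian) (i₀ : Fin n),
    h.eigenvalues i₀ = (d : ℝ) ∧ ∀ i, i ≠ i₀ → |h.eigenvalues i| ≤ lam

/-- `Γ(X,W)`: the set of all vertices of `W` (possibly belonging to `X`) having a neighbor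
in `X`. -/
noncomputable def GammaIn (n : ℕ) (G : SimpleGraph (Fin n)) (X W : Finset (Fin n)) :
    Finset (Fin n) :=
  W.filter (fun v => ∃ x ∈ X, G.Adj x v)

/-! Put `Y = Γ(X,S)`. Every vertex of `X` has at least `d₁` neighbours in `Y`, so the number of
edges from `X` to `Y` is at least `d₁|X|`; the expander mixing lemma bounds it above by
`d|X||Y|/n + λ√(|X||Y|) ≤ δd(|Y| + √(|X||Y|))` once `|X| ≤ δn` and `λ ≤ δd`. If `|Y|` were below
`t|X|` with `t = d₁/(2δd) ≥ 1`, then also `√(|X||Y|) ≤ t|X|`, and the right-hand side would drop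
below `2δdt|X| = d₁|X|`. -/

open Matrix Finset

namespace Matrix.IsHermitian

variable {ι : Type*} [Fintype ι] [DecidableEq ι] {A : Matrix ι ι ℝ} (hA : A.IsHermitian)

noncomputable def eigenCoord (x : ι → ℝ) (i : ι) : ℝ := ⇑(hA.eigenvectorBasis i) ⬝ᵥ x

lemma eigenCoord_mulVec (x : ι → ℝ) (i : ι) :
    hA.eigenCoord (A *ᵥ x) i = hA.eigenvalues i * hA.eigenCoord x i := by
  have hsymm : Aᵀ = A := by simpa using hA.eq
  rw [eigenCoord, eigenCoord, dotProduct_mulVec, ← mulVec_transpose, hsymm,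
    mulVec_eigenvectorBasis, smul_dotProduct, smul_eq_mul]

lemma dotProduct_eq_sum_eigenCoord (x y : ι → ℝ) :
    x ⬝ᵥ y = ∑ i, hA.eigenCoord x i * hA.eigenCoord y i := by
  have := hA.eigenvectorBasis.sum_inner_mul_inner (WithLp.toLp 2 x) (WithLp.toLp 2 y)
  simp only [EuclideanSpace.inner_eq_star_dotProduct, star_trivial] at this
  rw [dotProduct_comm, ← this]
  simp only [eigenCoord, dotProduct_comm]

lemma dotProduct_mulVec_eq_sum_eigenvalues (x y : ι → ℝ) :
    x ⬝ᵥ (A *ᵥ y) = ∑ i, hA.eigenvalues i * hA.eigenCoord x i * hA.eigenCoord y i := by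
  simp only [hA.dotProduct_eq_sum_eigenCoord x, eigenCoord_mulVec]
  exact sum_congr rfl fun i _ => by ring

lemma eigenCoord_eq_zero_of_mulVec_eq_smul {v : ι → ℝ} {r : ℝ} (hv : A *ᵥ v = r • v) {i : ι}
    (hi : hA.eigenvalues i ≠ r) : hA.eigenCoord v i = 0 := by
  have h := hA.eigenCoord_mulVec v i
  rw [hv, eigenCoord, dotProduct_smul, smul_eq_mul] at h
  exact (mul_eq_mul_right_iff.1 h.symm).resolve_left hi

lemma sum_erase_eigenvalues_mul_le {lam : ℝ} (i₀ : ι)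
    (hbd : ∀ i, i ≠ i₀ → |hA.eigenvalues i| ≤ lam) (hlam : 0 ≤ lam) (x y : ι → ℝ) :
    ∑ i ∈ univ.erase i₀, hA.eigenvalues i * hA.eigenCoord x i * hA.eigenCoord y i
      ≤ lam * (√(x ⬝ᵥ x) * √(y ⬝ᵥ y)) := by
  have hsq : ∀ z, ∑ i, |hA.eigenCoord z i| ^ 2 = z ⬝ᵥ z := fun z => by
    simp only [hA.dotProduct_eq_sum_eigenCoord z, sq_abs, ← sq]
  calc ∑ i ∈ univ.erase i₀, hA.eigenvalues i * hA.eigenCoord x i * hA.eigenCoord y i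
      ≤ ∑ i ∈ univ.erase i₀, lam * (|hA.eigenCoord x i| * |hA.eigenCoord y i|) := by
        refine sum_le_sum fun i hi => ?_
        calc hA.eigenvalues i * hA.eigenCoord x i * hA.eigenCoord y i
            ≤ |hA.eigenvalues i| * (|hA.eigenCoord x i| * |hA.eigenCoord y i|) := by
              rw [mul_assoc, ← abs_mul, ← abs_mul]; exact le_abs_self _
          _ ≤ lam * (|hA.eigenCoord x i| * |hA.eigenCoord y i|) := by
              gcongr; exact hbd i (ne_of_mem_erase hi)
    _ ≤ lam * ∑ i, |hA.eigenCoord x i| * |hA.eigenCoord y i| := by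
        rw [← mul_sum]
        gcongr
        exact erase_subset _ _
    _ ≤ lam * (√(x ⬝ᵥ x) * √(y ⬝ᵥ y)) := by
        gcongr
        simpa only [hsq] using
          Real.sum_mul_le_sqrt_mul_sqrt univ (|hA.eigenCoord x ·|) (|hA.eigenCoord y ·|)

theorem dotProduct_mulVec_le_of_eigenvalues {r lam : ℝ} (i₀ : ι)
    (hone : A *ᵥ 1 = r • 1) (hi₀ : hA.eigenvalues i₀ = r)
    (hbd : ∀ i, i ≠ i₀ → |hA.eigenvalues i| ≤ lam) (hlam : 0 ≤ lam) (hlamr : lam < r)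
    (x y : ι → ℝ) :
    x ⬝ᵥ (A *ᵥ y) ≤
      r * (x ⬝ᵥ 1) * (y ⬝ᵥ 1) / Fintype.card ι + lam * (√(x ⬝ᵥ x) * √(y ⬝ᵥ y)) := by
  -- `1` is an `r`-eigenvector and no other eigenvalue equals `r`, so `1` lies along `i₀`.
  have hone_perp : ∀ i, i ≠ i₀ → hA.eigenCoord 1 i = 0 := fun i hi =>
    hA.eigenCoord_eq_zero_of_mulVec_eq_smul hone fun h => by
      linarith [le_abs_self (hA.eigenvalues i), hbd i hi]
  have hdot_one : ∀ z, z ⬝ᵥ 1 = hA.eigenCoord z i₀ * hA.eigenCoord 1 i₀ := fun z => by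
    rw [hA.dotProduct_eq_sum_eigenCoord, sum_eq_single i₀
      (fun i _ hi => by rw [hone_perp i hi, mul_zero]) (by simp)]
  have hcard : (Fintype.card ι : ℝ) = hA.eigenCoord 1 i₀ * hA.eigenCoord 1 i₀ := by
    rw [← hdot_one, dotProduct_one]; simp
  have hcard_pos : (0 : ℝ) < Fintype.card ι := by
    exact_mod_cast Fintype.card_pos_iff.2 ⟨i₀⟩
  have head : hA.eigenvalues i₀ * hA.eigenCoord x i₀ * hA.eigenCoord y i₀ =
      r * (x ⬝ᵥ 1) * (y ⬝ᵥ 1) / Fintype.card ι := by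
    rw [hi₀, hdot_one, hdot_one, eq_div_iff hcard_pos.ne', hcard]; ring
  rw [hA.dotProduct_mulVec_eq_sum_eigenvalues, ← add_sum_erase _ _ (mem_univ i₀), head]
  exact add_le_add_right (hA.sum_erase_eigenvalues_mul_le i₀ hbd hlam x y) _

end Matrix.IsHermitian

namespace Finset

variable {V : Type*} [Fintype V]

lemma indicator_one_dotProduct_one (X : Finset V) :
    Set.indicator (X : Set V) (1 : V → ℝ) ⬝ᵥ 1 = #X := by
  simp [dotProduct_one, Set.indicator_apply]

lemma indicator_one_dotProduct_self (X : Finset V) :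
    Set.indicator (X : Set V) (1 : V → ℝ) ⬝ᵥ Set.indicator (X : Set V) 1 = #X := by
  simp [dotProduct, Set.indicator_apply]

end Finset

lemma SimpleGraph.indicator_one_dotProduct_adjMatrix_mulVec {V : Type*} [Fintype V]
    [DecidableEq V] (G : SimpleGraph V) [DecidableRel G.Adj] (X Y : Finset V) :
    Set.indicator (X : Set V) (1 : V → ℝ) ⬝ᵥ (G.adjMatrix ℝ *ᵥ Set.indicator (Y : Set V) 1) =
      ∑ u ∈ X, (#(Y ∩ G.neighborFinset u) : ℝ) := by
  simp [dotProduct, Set.indicator_apply, sum_ite_mem, inter_comm]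

namespace IsNDLGraph

variable {n d : ℕ} {lam : ℝ} {G : SimpleGraph (Fin n)}

lemma lam_nonneg (hG : IsNDLGraph n G d lam) (hn : 2 ≤ n) : 0 ≤ lam := by
  obtain ⟨-, _, i₀, -, hbd⟩ := hG
  have : Nontrivial (Fin n) := Fin.nontrivial_iff_two_le.2 hn
  obtain ⟨i, hi⟩ := exists_ne i₀
  exact (abs_nonneg _).trans (hbd i hi)

theorem sum_card_inter_neighborFinset_le (hG : IsNDLGraph n G d lam) (hlam : 0 ≤ lam)
    (hlamd : lam < d) (X Y : Finset (Fin n)) :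
    ∑ u ∈ X, (#(Y ∩ G.neighborFinset u) : ℝ) ≤ d * #X * #Y / n + lam * √(#X * #Y) := by
  obtain ⟨hreg, hA, i₀, hi₀, hbd⟩ := hG
  have hone : G.adjMatrix ℝ *ᵥ 1 = (d : ℝ) • 1 := by
    ext v
    simpa using SimpleGraph.adjMatrix_mulVec_const_apply_of_regular (a := (1 : ℝ)) hreg (v := v)
  have := hA.dotProduct_mulVec_le_of_eigenvalues i₀ hone hi₀ hbd hlam hlamd
    (Set.indicator (X : Set (Fin n)) 1) (Set.indicator (Y : Set (Fin n)) 1)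
  rwa [G.indicator_one_dotProduct_adjMatrix_mulVec, indicator_one_dotProduct_one,
    indicator_one_dotProduct_one, indicator_one_dotProduct_self, indicator_one_dotProduct_self,
    Fintype.card_fin, ← Real.sqrt_mul (Nat.cast_nonneg _)] at this

end IsNDLGraph

lemma div_mul_le_of_mul_le_add_mul_sqrt {a c k m : ℝ} (ha : 0 < a) (hc : 2 * a ≤ c)
    (hk : 0 ≤ k) (h : c * k ≤ a * m + a * √(k * m)) : c / (2 * a) * k ≤ m := by
  set t := c / (2 * a)
  have ht : 1 ≤ t := (one_le_div (by positivity)).2 hc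
  have hct : c = 2 * a * t := by simp only [t]; field_simp
  by_contra! hm
  have hsqrt : √(k * m) ≤ t * k :=
    calc √(k * m) ≤ √((t * k) ^ 2) := Real.sqrt_le_sqrt (by
        nlinarith [mul_le_mul_of_nonneg_left hm.le hk,
          mul_le_mul_of_nonneg_right ht (by positivity : 0 ≤ t * k * k)])
      _ = t * k := Real.sqrt_sq (by positivity)
  nlinarith [mul_lt_mul_of_pos_left hm ha, mul_le_mul_of_nonneg_left hsqrt ha.le]

lemma mul_card_le_sum_card_gammaIn_inter_neighborFinset {n : ℕ} (G : SimpleGraph (Fin n))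
    {S : Finset (Fin n)} {d₁ : ℝ} (hS : ∀ v, d₁ ≤ (#(S ∩ G.neighborFinset v) : ℝ))
    (X : Finset (Fin n)) :
    d₁ * #X ≤ ∑ u ∈ X, (#(GammaIn n G X S ∩ G.neighborFinset u) : ℝ) := by
  rw [mul_comm, ← nsmul_eq_mul]
  refine card_nsmul_le_sum _ _ _ fun u hu => (hS u).trans ?_
  refine Nat.cast_le.2 (card_le_card fun v hv => ?_)
  obtain ⟨hvS, hvN⟩ := mem_inter.1 hv
  exact mem_inter.2 ⟨mem_filter.2 ⟨hvS, u, hu, (G.mem_neighborFinset u v).1 hvN⟩, hvN⟩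

/-- Let `δ = 0.001` and let `G` be an `(n,d,λ)`-graph with `λ ≤ δd`. Let `S ⊆ V(G)` be such
that every vertex has at least `d₁` neighbors in `S`, where `d₁ ≥ 2δd`. Then every `X ⊆ V(G)`
with `|X| ≤ δn` satisfies `|Γ(X,S)| ≥ (d₁/(2δd))·|X|`. -/
theorem expansion_into_matchmaker (n d : ℕ) (lam d₁ : ℝ) (G : SimpleGraph (Fin n))
    (hG : IsNDLGraph n G d lam) (hlam : lam ≤ 0.001 * (d : ℝ))
    (S : Finset (Fin n))
    (hS : ∀ v : Fin n, d₁ ≤ ((S ∩ G.neighborFinset v).card : ℝ))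
    (hd₁ : d₁ ≥ 2 * 0.001 * (d : ℝ)) :
    ∀ X : Finset (Fin n), (X.card : ℝ) ≤ 0.001 * (n : ℝ) →
      ((GammaIn n G X S).card : ℝ) ≥ (d₁ / (2 * 0.001 * (d : ℝ))) * (X.card : ℝ) := by
  intro X hX
  rcases X.eq_empty_or_nonempty with rfl | hXne
  · simp
  rcases Nat.eq_zero_or_pos d with rfl | hd
  · simp
  have hk : (1 : ℝ) ≤ #X := by exact_mod_cast hXne.card_pos
  have hn : 2 ≤ n := by exact_mod_cast (by linarith : (2 : ℝ) ≤ n)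
  have hd_pos : (0 : ℝ) < d := by exact_mod_cast hd
  have hedges := hG.sum_card_inter_neighborFinset_le (hG.lam_nonneg hn) (by linarith) X
    (GammaIn n G X S)
  have hlower := mul_card_le_sum_card_gammaIn_inter_neighborFinset G hS X
  have hfirst : (d : ℝ) * #X * #(GammaIn n G X S) / n ≤ 0.001 * d * #(GammaIn n G X S) := by
    rw [div_le_iff₀ (by linarith)]
    nlinarith [mul_le_mul_of_nonneg_left hX (by positivity : (0 : ℝ) ≤ d * #(GammaIn n G X S))]
  have hsecond := mul_le_mul_of_nonneg_right hlam (Real.sqrt_nonneg (#X * #(GammaIn n G X S)))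
  rw [ge_iff_le, mul_assoc 2]
  exact div_mul_le_of_mul_le_add_mul_sqrt (by positivity) (by linarith) (by positivity)
    (by linarith)
end

section
/- Let δ₁ = 0.048. There exists d₀ such that every d-regular graph G on n vertices with d ≥ d₀ contains three pairwise disjoint vertex subsets S₁, S₂, S₃, each of size at most δ₁n, such that every vertex v ∈ V(G) has at least δ₁d/4 neighbors in each of S₁, S₂ and S₃. -/
open scoped Classical

/-!
Colour the vertices independently and uniformly with 100 colours and let `S k` consist of the
vertices of colour `3k`, `3k + 1` or `3k + 2`, so that each vertex expects `0.03 d` neighbours in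
each `S k`. By Chernoff's bound a vertex `v` fails to have between `0.012 d` and `0.048 d`
neighbours in some `S k` with probability at most `6 e^{-0.003 d}`. This event depends only on
the colours of the neighbours of `v`, so it is independent of the events at all vertices sharing
no neighbour with `v`, of which there are all but at most `d²`. As `24 d² e^{-0.003 d} ≤ 1` for
large `d`, the Lovász local lemma yields a colouring with no bad event. The size bound then
follows by double counting: `d · #(S k) = ∑ v, #(S k ∩ N(v)) ≤ n · 0.048 d`.
-/

open Finset Real

section LocalLemma

variable {Ω ι : Type*} [Fintype Ω] [DecidableEq Ω] (A : ι → Finset Ω)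

noncomputable def avoiding (T : Finset ι) : Finset Ω :=
  univ.filter fun ω => ∀ j ∈ T, ω ∉ A j

@[simp]
lemma mem_avoiding {T : Finset ι} {ω : Ω} : ω ∈ avoiding A T ↔ ∀ j ∈ T, ω ∉ A j := by
  simp [avoiding]

lemma avoiding_anti {S T : Finset ι} (h : S ⊆ T) : avoiding A T ⊆ avoiding A S :=
  fun _ hω => (mem_avoiding A).2 fun j hj => (mem_avoiding A).1 hω j (h hj)

lemma avoiding_insert (i : ι) (T : Finset ι) : avoiding A (insert i T) = avoiding A T \ A i := by
  ext ω; simp [and_comm]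

lemma card_avoiding_le_card_avoiding_union_add (R S : Finset ι) :
    #(avoiding A R) ≤ #(avoiding A (R ∪ S)) + ∑ j ∈ S, #(A j ∩ avoiding A R) := by
  calc #(avoiding A R) ≤ #(avoiding A (R ∪ S) ∪ S.biUnion fun j => A j ∩ avoiding A R) := by
        refine card_le_card fun ω hω => ?_
        by_cases h : ∃ j ∈ S, ω ∈ A j
        · obtain ⟨j, hj, hωj⟩ := h
          exact mem_union_right _ (mem_biUnion.2 ⟨j, hj, mem_inter.2 ⟨hωj, hω⟩⟩)
        · push Not at h
          refine mem_union_left _ ((mem_avoiding A).2 fun j hj => ?_)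
          rcases mem_union.1 hj with hj | hj
          exacts [(mem_avoiding A).1 hω j hj, h j hj]
    _ ≤ _ := (card_union_le _ _).trans (by gcongr; exact card_biUnion_le)

variable {A} {Γ : ι → Finset ι} {p : ℝ}

lemma card_inter_avoiding_le (hp : 0 ≤ p) (hΓ : ∀ i, 4 * p * #(Γ i) ≤ 1)
    (hA : ∀ i T, Disjoint T (Γ i) → #(A i ∩ avoiding A T) ≤ p * #(avoiding A T))
    (S : Finset ι) (i : ι) : #(A i ∩ avoiding A S) ≤ 2 * p * #(avoiding A S) := by
  induction S using Finset.strongInduction generalizing i with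
  | H S ih =>
  by_cases hS : Disjoint S (Γ i)
  · nlinarith [hA i S hS, (#(avoiding A S)).cast_nonneg (α := ℝ)]
  obtain ⟨j, hjS, hjΓ⟩ := not_disjoint_iff.1 hS
  set R := S \ Γ i
  have hRS : R ⊂ S :=
    (ssubset_iff_of_subset sdiff_subset).2 ⟨j, hjS, fun h => (mem_sdiff.1 h).2 hjΓ⟩
  have hsplit : (#(avoiding A R) : ℝ)
      ≤ #(avoiding A S) + ∑ j ∈ S ∩ Γ i, (#(A j ∩ avoiding A R) : ℝ) := by
    have := card_avoiding_le_card_avoiding_union_add A R (S ∩ Γ i)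
    rw [sdiff_union_inter] at this
    exact_mod_cast this
  have hsum : ∑ j ∈ S ∩ Γ i, (#(A j ∩ avoiding A R) : ℝ) ≤ #(avoiding A R) / 2 :=
    calc ∑ j ∈ S ∩ Γ i, (#(A j ∩ avoiding A R) : ℝ)
        ≤ #(S ∩ Γ i) * (2 * p * #(avoiding A R)) := by
          simpa using sum_le_sum fun j _ => ih R hRS j
      _ ≤ #(Γ i) * (2 * p * #(avoiding A R)) := by
          gcongr
          exact inter_subset_right
      _ ≤ #(avoiding A R) / 2 := by nlinarith [hΓ i, (#(avoiding A R)).cast_nonneg (α := ℝ)]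
  calc (#(A i ∩ avoiding A S) : ℝ) ≤ #(A i ∩ avoiding A R) := by
        gcongr; exact avoiding_anti A sdiff_subset
    _ ≤ p * #(avoiding A R) := hA i R sdiff_disjoint
    _ ≤ 2 * p * #(avoiding A S) := by nlinarith

lemma card_avoiding_pos [Nonempty Ω] (hp : 0 ≤ p) (hp1 : 4 * p ≤ 1)
    (hΓ : ∀ i, 4 * p * #(Γ i) ≤ 1)
    (hA : ∀ i T, Disjoint T (Γ i) → #(A i ∩ avoiding A T) ≤ p * #(avoiding A T))
    (S : Finset ι) :
    0 < #(avoiding A S) := by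
  induction S using Finset.induction_on with
  | empty => simpa [avoiding] using Fintype.card_pos
  | insert i S _ ih =>
    have hi := card_inter_avoiding_le hp hΓ hA S i
    have hsplit : (#(avoiding A S \ A i) : ℝ) + #(A i ∩ avoiding A S) = #(avoiding A S) := by
      rw [inter_comm]
      exact_mod_cast card_sdiff_add_card_inter _ _
    rw [avoiding_insert, ← Nat.cast_pos (α := ℝ)]
    have : (0 : ℝ) < #(avoiding A S) := by exact_mod_cast ih
    nlinarith

/-- `hA` says that `A i` has probability at most `p` conditionally on avoiding any events outside
`Γ i`. -/
theorem lovasz_local_lemma [Fintype ι] [Nonempty Ω] (hp : 0 ≤ p) (hp1 : 4 * p ≤ 1)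
    (hΓ : ∀ i, 4 * p * #(Γ i) ≤ 1)
    (hA : ∀ i T, Disjoint T (Γ i) → #(A i ∩ avoiding A T) ≤ p * #(avoiding A T)) :
    ∃ ω, ∀ i, ω ∉ A i := by
  obtain ⟨ω, hω⟩ := card_pos.1 (card_avoiding_pos hp hp1 hΓ hA univ)
  exact ⟨ω, fun i => (mem_avoiding A).1 hω i (mem_univ i)⟩

end LocalLemma

section ProductSpace

variable {V L ι : Type*} [Fintype V] [Fintype L]

lemma card_mul_card_eq_card_inter_mul_of_dependsOn {A B : Finset (V → L)} {s t : Finset V}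
    (hA : DependsOn (· ∈ A) (s : Set V)) (hB : DependsOn (· ∈ B) (t : Set V))
    (hst : Disjoint s t) :
    #A * #B = #(A ∩ B) * Fintype.card (V → L) := by
  let swap : (V → L) × (V → L) → (V → L) × (V → L) :=
    fun x => (s.piecewise x.1 x.2, s.piecewise x.2 x.1)
  have hswap : ∀ x, swap (swap x) = x := fun x => by
    ext i <;> by_cases hi : i ∈ s <;> simp [swap, hi]
  have hs : ∀ f g : V → L, ∀ i ∈ (s : Set V), s.piecewise f g i = f i := fun f g i hi =>
    s.piecewise_eq_of_mem f g hi
  have ht : ∀ f g : V → L, ∀ i ∈ (t : Set V), s.piecewise f g i = g i := fun f g i hi =>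
    s.piecewise_eq_of_notMem f g (disjoint_right.1 hst hi)
  have : #(A ×ˢ B) = #((A ∩ B) ×ˢ (univ : Finset (V → L))) := by
    refine card_nbij' swap swap (fun x hx => ?_) (fun x hx => ?_) (fun x _ => hswap x)
      (fun x _ => hswap x)
    · simp only [coe_product, Set.mem_prod, mem_coe] at hx
      simp only [swap, coe_product, Set.mem_prod, mem_coe, mem_inter, mem_univ, and_true]
      exact ⟨(hA (hs _ _)).mpr hx.1, (hB (ht _ _)).mpr hx.2⟩
    · simp only [coe_product, Set.mem_prod, mem_coe, mem_inter, mem_univ, and_true] at hx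
      simp only [swap, coe_product, Set.mem_prod, mem_coe]
      exact ⟨(hA (hs _ _)).mpr hx.1, (hB (ht _ _)).mpr hx.2⟩
  simpa [card_product] using this

lemma dependsOn_mem_avoiding {A : ι → Finset (V → L)} {s : ι → Finset V}
    (hA : ∀ i, DependsOn (· ∈ A i) (s i : Set V)) (T : Finset ι) :
    DependsOn (· ∈ avoiding A T) (T.biUnion s : Set V) := fun x y hxy => by
  simp only [mem_avoiding]
  refine propext (forall₂_congr fun j hj => ?_)
  exact not_congr (Iff.of_eq (hA j fun i hi => hxy i (by simpa using ⟨j, hj, hi⟩)))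

theorem exists_forall_notMem_of_dependsOn [Fintype ι] [Nonempty L] {A : ι → Finset (V → L)}
    {s : ι → Finset V} {Γ : ι → Finset ι} {p : ℝ}
    (hA : ∀ i, DependsOn (· ∈ A i) (s i : Set V))
    (hΓ : ∀ i j, j ∉ Γ i → Disjoint (s i) (s j))
    (hcard : ∀ i, #(A i) ≤ p * Fintype.card (V → L))
    (hp : 0 ≤ p) (hp1 : 4 * p ≤ 1) (hpΓ : ∀ i, 4 * p * #(Γ i) ≤ 1) :
    ∃ ω, ∀ i, ω ∉ A i := by
  refine lovasz_local_lemma hp hp1 hpΓ fun i T hT => ?_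
  have hdisj : Disjoint (s i) (T.biUnion s) :=
    (disjoint_biUnion_right _ _ _).2 fun j hj => hΓ i j (disjoint_left.1 hT hj)
  have hindep :
      (#(A i) * #(avoiding A T) : ℝ) = #(A i ∩ avoiding A T) * Fintype.card (V → L) := by
    exact_mod_cast card_mul_card_eq_card_inter_mul_of_dependsOn (hA i)
      (dependsOn_mem_avoiding hA T) hdisj
  have hN : (0 : ℝ) < Fintype.card (V → L) := by exact_mod_cast Fintype.card_pos
  refine le_of_mul_le_mul_right ?_ hN
  calc (#(A i ∩ avoiding A T) : ℝ) * Fintype.card (V → L)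
      = #(A i) * #(avoiding A T) := hindep.symm
    _ ≤ p * Fintype.card (V → L) * #(avoiding A T) := by gcongr; exact hcard i
    _ = p * #(avoiding A T) * Fintype.card (V → L) := by ring

end ProductSpace

section Chernoff

variable {V L : Type*} [DecidableEq L]

noncomputable def hits (D : Finset V) (B : Finset L) (ω : V → L) : ℕ :=
  #(D.filter fun u => ω u ∈ B)

lemma hits_congr {D : Finset V} {B : Finset L} {x y : V → L} (h : ∀ u ∈ D, x u = y u) :
    hits D B x = hits D B y := by
  unfold hits
  congr 1
  exact filter_congr fun u hu => by rw [h u hu]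

variable [Fintype V]

lemma pow_hits_eq_prod (D : Finset V) (B : Finset L) (r : ℝ) (ω : V → L) :
    r ^ hits D B ω = ∏ u, if u ∈ D ∧ ω u ∈ B then r else 1 := by
  rw [prod_ite, prod_const, prod_const_one, mul_one, hits]
  congr 2
  ext u
  simp

variable [Fintype L]

lemma sum_ite_mem_le_exp [Nonempty L] (B : Finset L) (r : ℝ) :
    ∑ a, (if a ∈ B then r else 1) ≤ Fintype.card L * exp (#B / Fintype.card L * (r - 1)) := by
  have hL : (0 : ℝ) < Fintype.card L := by exact_mod_cast Fintype.card_pos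
  calc ∑ a, (if a ∈ B then r else 1) = #B * r + (Fintype.card L - #B) := by
        rw [sum_ite, sum_const, sum_const, filter_mem_eq_inter, filter_notMem_eq_sdiff,
          univ_inter, card_univ_sdiff, nsmul_eq_mul, nsmul_eq_mul, Nat.cast_sub (card_le_univ B)]
        ring
    _ = Fintype.card L * (#B / Fintype.card L * (r - 1) + 1) := by field_simp; ring
    _ ≤ _ := by gcongr; exact add_one_le_exp _

lemma sum_pow_hits_le [Nonempty L] (D : Finset V) (B : Finset L) {r : ℝ} (hr : 0 ≤ r) :
    ∑ ω : V → L, r ^ hits D B ω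
      ≤ exp (#B / Fintype.card L * (r - 1) * #D) * Fintype.card L ^ Fintype.card V := by
  set c := #B / Fintype.card L * (r - 1)
  have hcoord : ∀ u, ∑ a, (if u ∈ D ∧ a ∈ B then r else 1)
      ≤ Fintype.card L * exp (if u ∈ D then c else 0) := fun u => by
    by_cases hu : u ∈ D
    · simpa [hu] using sum_ite_mem_le_exp B r
    · simp [hu]
  calc ∑ ω : V → L, r ^ hits D B ω
      = ∏ u, ∑ a, (if u ∈ D ∧ a ∈ B then r else 1) := by
        simp only [pow_hits_eq_prod, Fintype.prod_sum]
    _ ≤ ∏ u, (Fintype.card L * exp (if u ∈ D then c else 0)) :=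
        prod_le_prod (fun u _ => sum_nonneg fun a _ => by split_ifs <;> positivity)
          fun u _ => hcoord u
    _ = exp (c * #D) * Fintype.card L ^ Fintype.card V := by
        rw [prod_mul_distrib, prod_const, ← exp_sum, sum_ite_mem, univ_inter, sum_const,
          nsmul_eq_mul, card_univ, mul_comm, mul_comm c]

lemma card_hits_tail_le [Nonempty L] (D : Finset V) (B : Finset L) (θ t : ℝ) :
    (#(univ.filter fun ω : V → L => θ * t ≤ θ * hits D B ω) : ℝ)
      ≤ exp (#B / Fintype.card L * (exp θ - 1) * #D - θ * t)
        * Fintype.card L ^ Fintype.card V := by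
  set E := univ.filter fun ω : V → L => θ * t ≤ θ * hits D B ω
  have hmarkov : #E * exp (θ * t) ≤ ∑ ω ∈ E, exp θ ^ hits D B ω := by
    rw [← nsmul_eq_mul]
    refine card_nsmul_le_sum _ _ _ fun ω hω => ?_
    rw [← exp_nat_mul]
    exact exp_le_exp.2 ((mem_filter.1 hω).2.trans_eq (mul_comm _ _))
  have hall : ∑ ω ∈ E, exp θ ^ hits D B ω ≤ ∑ ω : V → L, exp θ ^ hits D B ω :=
    sum_le_sum_of_subset_of_nonneg (subset_univ E) fun _ _ _ => by positivity
  rw [exp_sub, div_mul_eq_mul_div, le_div_iff₀ (exp_pos _)]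
  exact hmarkov.trans (hall.trans (sum_pow_hits_le D B (exp_pos θ).le))

lemma card_hits_gt_le (D : Finset V) {B : Finset (Fin 100)} (hB : #B = 3) :
    (#(univ.filter fun ω : V → Fin 100 => (0.048 * #D : ℝ) < hits D B ω) : ℝ)
      ≤ exp (-0.003 * #D) * 100 ^ Fintype.card V := by
  -- `θ = log 2` turns the Chernoff exponent into `(0.03 - 0.048 log 2) #D ≤ -0.003 #D`.
  have hlog := log_two_gt_d9
  calc (#(univ.filter fun ω : V → Fin 100 => (0.048 * #D : ℝ) < hits D B ω) : ℝ)
      ≤ #(univ.filter fun ω : V → Fin 100 =>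
          log 2 * (0.048 * #D) ≤ log 2 * hits D B ω) := by
        gcongr with ω
        intro h
        exact mul_le_mul_of_nonneg_left h.le (log_pos one_lt_two).le
    _ ≤ _ := by
        refine (card_hits_tail_le D B _ _).trans ?_
        simp only [hB, exp_log two_pos, Fintype.card_fin, Nat.cast_ofNat]
        gcongr
        nlinarith [(#D).cast_nonneg (α := ℝ)]

lemma card_hits_lt_le (D : Finset V) {B : Finset (Fin 100)} (hB : #B = 3) :
    (#(univ.filter fun ω : V → Fin 100 => (hits D B ω : ℝ) < 0.048 * #D / 4) : ℝ)
      ≤ exp (-0.003 * #D) * 100 ^ Fintype.card V := by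
  -- `θ = -log 2` turns the Chernoff exponent into `(0.012 log 2 - 0.015) #D ≤ -0.003 #D`.
  have hlog := log_two_lt_d9
  calc (#(univ.filter fun ω : V → Fin 100 => (hits D B ω : ℝ) < 0.048 * #D / 4) : ℝ)
      ≤ #(univ.filter fun ω : V → Fin 100 =>
          -log 2 * (0.048 * #D / 4) ≤ -log 2 * hits D B ω) := by
        gcongr with ω
        intro h
        exact mul_le_mul_of_nonpos_left h.le (neg_nonpos.2 (log_pos one_lt_two).le)
    _ ≤ _ := by
        refine (card_hits_tail_le D B _ _).trans ?_
        simp only [hB, exp_neg, exp_log two_pos, Fintype.card_fin, Nat.cast_ofNat]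
        gcongr
        nlinarith [(#D).cast_nonneg (α := ℝ)]

end Chernoff

section RegularGraph

variable {V : Type*} [Fintype V] {G : SimpleGraph V} {d : ℕ}

lemma card_filter_not_disjoint_neighborFinset_le [DecidableEq V] (hG : G.IsRegularOfDegree d)
    (v : V) :
    #(univ.filter fun u => ¬Disjoint (G.neighborFinset v) (G.neighborFinset u)) ≤ d * d := by
  calc #(univ.filter fun u => ¬Disjoint (G.neighborFinset v) (G.neighborFinset u))
      ≤ #((G.neighborFinset v).biUnion fun w => G.neighborFinset w) := by
        refine card_le_card fun u hu => ?_
        obtain ⟨w, hwv, hwu⟩ := not_disjoint_iff.1 (mem_filter.1 hu).2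
        exact mem_biUnion.2 ⟨w, hwv, (G.mem_neighborFinset _ _).2
          ((G.mem_neighborFinset _ _).1 hwu).symm⟩
    _ ≤ ∑ w ∈ G.neighborFinset v, #(G.neighborFinset w) := card_biUnion_le
    _ = d * d := by simp [hG.degree_eq]

lemma card_le_of_card_inter_neighborFinset_le [DecidableEq V] (hG : G.IsRegularOfDegree d)
    (hd : 0 < d) {S : Finset V} {c : ℝ}
    (h : ∀ v, (#(S ∩ G.neighborFinset v) : ℝ) ≤ c * d) :
    (#S : ℝ) ≤ c * Fintype.card V := by
  have hcount := card_nsmul_le_card_nsmul (r := G.Adj) (s := S) (t := univ) (m := (d : ℝ))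
    (n := c * d) (fun u _ => ?_) (fun v _ => ?_)
  · rw [nsmul_eq_mul, nsmul_eq_mul, card_univ] at hcount
    have : (0 : ℝ) < d := by exact_mod_cast hd
    nlinarith
  · have : univ.bipartiteAbove G.Adj u = G.neighborFinset u := by
      ext w; simp [bipartiteAbove]
    simp [this, hG.degree_eq]
  · have : S.bipartiteBelow G.Adj v = S ∩ G.neighborFinset v := by
      ext w; simp [bipartiteBelow, G.adj_comm]
    simpa [this] using h v

end RegularGraph

section Coloring

def colorClass (k : Fin 3) : Finset (Fin 100) := univ.filter fun a => a.val / 3 = k.val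

lemma card_colorClass (k : Fin 3) : #(colorClass k) = 3 := by
  fin_cases k <;> decide

lemma disjoint_colorClass {k l : Fin 3} (h : k ≠ l) : Disjoint (colorClass k) (colorClass l) :=
  disjoint_filter.2 fun _ _ hk hl => h (Fin.ext (hk.symm.trans hl))

variable {V : Type*} [Fintype V] (G : SimpleGraph V) (d : ℕ)

def IsBalancedAt (ω : V → Fin 100) (v : V) : Prop :=
  ∀ k, (0.048 * d / 4 : ℝ) ≤ hits (G.neighborFinset v) (colorClass k) ω ∧
    (hits (G.neighborFinset v) (colorClass k) ω : ℝ) ≤ 0.048 * d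

noncomputable def unbalancedAt (v : V) : Finset (V → Fin 100) :=
  univ.filter fun ω => ¬IsBalancedAt G d ω v

@[simp]
lemma mem_unbalancedAt {ω : V → Fin 100} {v : V} :
    ω ∈ unbalancedAt G d v ↔ ¬IsBalancedAt G d ω v := by
  simp [unbalancedAt]

lemma dependsOn_mem_unbalancedAt (v : V) :
    DependsOn (· ∈ unbalancedAt G d v) (G.neighborFinset v : Set V) :=
  fun (x y : V → Fin 100) hxy => by
  have hhits : ∀ k, hits (G.neighborFinset v) (colorClass k) x
      = hits (G.neighborFinset v) (colorClass k) y := fun k =>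
    hits_congr fun u hu => hxy u (mem_coe.2 hu)
  simp only [mem_unbalancedAt, IsBalancedAt, hhits]

variable {G d}

lemma card_unbalancedAt_le (hG : G.IsRegularOfDegree d) (v : V) :
    (#(unbalancedAt G d v) : ℝ) ≤ 6 * exp (-0.003 * d) * Fintype.card (V → Fin 100) := by
  set N := G.neighborFinset v
  have hN : #N = d := by simp [N, hG.degree_eq]
  let tails : Fin 3 → Finset (V → Fin 100) := fun k =>
    (univ.filter fun ω => (hits N (colorClass k) ω : ℝ) < 0.048 * #N / 4) ∪
      univ.filter fun ω => (0.048 * #N : ℝ) < hits N (colorClass k) ω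
  have hsub : unbalancedAt G d v ⊆ univ.biUnion tails := fun ω hω => by
    simp only [mem_unbalancedAt, IsBalancedAt, not_forall, not_and_or, not_le] at hω
    obtain ⟨k, hk⟩ := hω
    simp only [mem_biUnion, mem_univ, true_and, tails, mem_union, mem_filter, hN]
    exact ⟨k, hk⟩
  have htail : ∀ k, (#(tails k) : ℝ) ≤ 2 * (exp (-0.003 * #N) * 100 ^ Fintype.card V) :=
    fun k => by
    calc (#(tails k) : ℝ)
        ≤ #(univ.filter fun ω => (hits N (colorClass k) ω : ℝ) < 0.048 * #N / 4) +
          #(univ.filter fun ω => (0.048 * #N : ℝ) < hits N (colorClass k) ω) := by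
          exact_mod_cast card_union_le _ _
      _ ≤ _ := by
          linarith [card_hits_lt_le N (card_colorClass k), card_hits_gt_le N (card_colorClass k)]
  calc (#(unbalancedAt G d v) : ℝ) ≤ ∑ k, (#(tails k) : ℝ) := by
        exact_mod_cast (card_le_card hsub).trans card_biUnion_le
    _ ≤ ∑ _k : Fin 3, 2 * (exp (-0.003 * #N) * 100 ^ Fintype.card V) :=
        sum_le_sum fun k _ => htail k
    _ = _ := by simp [hN]; ring

end Coloring

lemma mul_sq_mul_exp_le_one {x : ℝ} (hx : 10 ^ 10 ≤ x) :
    24 * x ^ 2 * exp (-0.003 * x) ≤ 1 := by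
  have hcube : (0.003 * x) ^ 3 / 6 ≤ exp (0.003 * x) := by
    simpa [Nat.factorial] using pow_div_factorial_le_exp (0.003 * x) (by positivity) 3
  rw [neg_mul, exp_neg, ← div_eq_mul_inv, div_le_one (exp_pos _)]
  nlinarith [sq_nonneg x]

lemma exists_forall_isBalancedAt {V : Type*} [Fintype V] [DecidableEq V] {G : SimpleGraph V}
    {d : ℕ} (hG : G.IsRegularOfDegree d) (hd : 10 ^ 10 ≤ d) :
    ∃ ω : V → Fin 100, ∀ v, IsBalancedAt G d ω v := by
  have hdR : (10 : ℝ) ^ 10 ≤ d := by exact_mod_cast hd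
  set p := 6 * exp (-0.003 * d) with hp
  have hpd : 4 * p * (d * d) ≤ 1 := by
    nlinarith [mul_sq_mul_exp_le_one hdR]
  have hpΓ : ∀ v, 4 * p * #(univ.filter fun u =>
      ¬Disjoint (G.neighborFinset v) (G.neighborFinset u)) ≤ 1 := fun v => by
    have hΓ : (#(univ.filter fun u =>
        ¬Disjoint (G.neighborFinset v) (G.neighborFinset u)) : ℝ) ≤ d * d := by
      exact_mod_cast card_filter_not_disjoint_neighborFinset_le hG v
    refine le_trans ?_ hpd
    gcongr
  obtain ⟨ω, hω⟩ := exists_forall_notMem_of_dependsOn (dependsOn_mem_unbalancedAt G d)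
    (fun v u h => by simpa using h) (card_unbalancedAt_le hG)
    (by positivity) (by nlinarith) hpΓ
  exact ⟨ω, fun v => by simpa using hω v⟩

/-- Let `δ₁ = 0.048`. There exists `d₀` such that every `d`-regular graph on `n` vertices with
`d ≥ d₀` contains three pairwise disjoint vertex subsets `S₁, S₂, S₃`, each of size at most
`δ₁n`, such that every vertex has at least `δ₁d/4` neighbors in each of `S₁`, `S₂`, `S₃`. -/
theorem three_matchmakers :
    ∃ d₀ : ℕ, ∀ (n d : ℕ) (G : SimpleGraph (Fin n)),
      d ≥ d₀ → G.IsRegularOfDegree d →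
      ∃ S₁ S₂ S₃ : Finset (Fin n),
        Disjoint S₁ S₂ ∧ Disjoint S₁ S₃ ∧ Disjoint S₂ S₃ ∧
        (S₁.card : ℝ) ≤ 0.048 * (n : ℝ) ∧
        (S₂.card : ℝ) ≤ 0.048 * (n : ℝ) ∧
        (S₃.card : ℝ) ≤ 0.048 * (n : ℝ) ∧
        ∀ v : Fin n,
          0.048 * (d : ℝ) / 4 ≤ ((S₁ ∩ G.neighborFinset v).card : ℝ) ∧
          0.048 * (d : ℝ) / 4 ≤ ((S₂ ∩ G.neighborFinset v).card : ℝ) ∧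
          0.048 * (d : ℝ) / 4 ≤ ((S₃ ∩ G.neighborFinset v).card : ℝ) := by
  refine ⟨10 ^ 10, fun n d G hd hG => ?_⟩
  obtain ⟨ω, hbal⟩ := exists_forall_isBalancedAt hG hd
  set S : Fin 3 → Finset (Fin n) := fun k => univ.filter fun u => ω u ∈ colorClass k
  have hS : ∀ k v, #(S k ∩ G.neighborFinset v) = hits (G.neighborFinset v) (colorClass k) ω :=
    fun k v => by rw [hits, filter_inter, univ_inter]
  have hdisj : ∀ k l, k ≠ l → Disjoint (S k) (S l) := fun k l hkl =>
    disjoint_filter.2 fun u _ hk hl => disjoint_left.1 (disjoint_colorClass hkl) hk hl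
  have hcard : ∀ k, (#(S k) : ℝ) ≤ 0.048 * n := fun k => by
    simpa using card_le_of_card_inter_neighborFinset_le hG (by positivity) fun v => by
      rw [hS]; exact (hbal v k).2
  refine ⟨S 0, S 1, S 2, hdisj _ _ (by decide), hdisj _ _ (by decide), hdisj _ _ (by decide),
    hcard 0, hcard 1, hcard 2, fun v => ?_⟩
  simp only [hS]
  exact ⟨(hbal v 0).1, (hbal v 1).1, (hbal v 2).1⟩
end

section
/- Let D, s ∈ ℕ. Let F be a graph with maximum degree at most D and |V(F)| < s. Suppose G is a (2s−2, D+2)-expanding graph and φ : F ↪ G is a (2s−2, D)-good embedding. Then for every graph F' with |V(F')| ≤ s and maximum degree at most D which is obtained from F by successively adding vertices of degree 1, there exists a (2s−2, D)-good embedding φ' : F' ↪ G which extends φ. -/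
open scoped Classical

/-- A graph `G` is `(s,K)`-expanding if every vertex set `X` with `|X| ≤ s` satisfies
`|N(X)| ≥ K|X|`, where `N(X)` is the set of vertices outside `X` having a neighbor in `X`. -/
def IsExpanding {β : Type*} [Fintype β] (G : SimpleGraph β) (s K : ℝ) : Prop :=
  ∀ X : Finset β, (X.card : ℝ) ≤ s →
    ((Finset.univ.filter (fun v => v ∉ X ∧ ∃ x ∈ X, G.Adj x v)).card : ℝ) ≥ K * (X.card : ℝ)

/-- `φ` is an embedding of the graph `F` (a subgraph of the complete graph on `α`, with vertex
set `F.verts`) into `G`: it is injective on `F.verts` and maps edges of `F` to edges of `G`. -/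
def IsEmbOn {α β : Type*} (F : (⊤ : SimpleGraph α).Subgraph) (G : SimpleGraph β)
    (φ : α → β) : Prop :=
  Set.InjOn φ F.verts ∧ ∀ a b, F.Adj a b → G.Adj (φ a) (φ b)

/-- An embedding `φ` of the (finite) graph `F` into `G` is `(s,D)`-good if for every
`X ⊆ V(G)` with `|X| ≤ s` we have
`|Γ_G(X) \ φ(V(F))| ≥ Σ_{v ∈ X} (D − deg_F(φ⁻¹(v))) + |φ(V(F)) ∩ X|`,
where `deg_F(φ⁻¹(v)) = 0` when `v ∉ φ(V(F))`.  (The right-hand side is written as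
`Σ_{a ∈ V(F), φ(a) ∈ X} (D − deg_F(a)) + D·|X \ φ(V(F))| + |φ(V(F)) ∩ X|`.) -/
def IsGoodEmb {α β : Type*} [Fintype α] [Fintype β]
    (F : (⊤ : SimpleGraph α).Subgraph) (G : SimpleGraph β) (φ : α → β)
    (s : ℝ) (D : ℕ) : Prop :=
  ∀ X : Finset β, (X.card : ℝ) ≤ s →
    (((Finset.univ.filter (fun v => ∃ x ∈ X, G.Adj x v)) \
        (F.verts.toFinite.toFinset.image φ)).card : ℤ) ≥
      (∑ a ∈ F.verts.toFinite.toFinset.filter (fun a => φ a ∈ X),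
          ((D : ℤ) - ((F.neighborSet a).ncard : ℤ)))
        + (D : ℤ) * ((X \ F.verts.toFinite.toFinset.image φ).card : ℤ)
        + (((F.verts.toFinite.toFinset.image φ) ∩ X).card : ℤ)

/-- `F'` is obtained from `F` by adding one new vertex `v` of degree `1`, joined to an existing
vertex `w`. -/
def AddLeaf {α : Type*} (F F' : (⊤ : SimpleGraph α).Subgraph) : Prop :=
  ∃ v w : α, v ∉ F.verts ∧ w ∈ F.verts ∧ F'.verts = insert v F.verts ∧
    ∀ x y : α, F'.Adj x y ↔ (F.Adj x y ∨ (x = v ∧ y = w) ∨ (x = w ∧ y = v))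


section FPauxSection
open Finset
namespace FPaux
set_option linter.unusedSectionVars false

variable {α β : Type*} [Fintype α] [Fintype β]

noncomputable def gam (G : SimpleGraph β) (X : Finset β) : Finset β :=
  Finset.univ.filter (fun v => ∃ x ∈ X, G.Adj x v)

noncomputable def im (F : (⊤ : SimpleGraph α).Subgraph) (φ : α → β) : Finset β :=
  F.verts.toFinite.toFinset.image φ

noncomputable def rhs (F : (⊤ : SimpleGraph α).Subgraph) (φ : α → β) (D : ℕ) (X : Finset β) : ℤ :=
  (∑ a ∈ F.verts.toFinite.toFinset.filter (fun a => φ a ∈ X),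
      ((D : ℤ) - ((F.neighborSet a).ncard : ℤ)))
    + (D : ℤ) * ((X \ im F φ).card : ℤ) + (((im F φ) ∩ X).card : ℤ)

noncomputable def slack (F : (⊤ : SimpleGraph α).Subgraph) (G : SimpleGraph β)
    (φ : α → β) (D : ℕ) (X : Finset β) : ℤ :=
  ((gam G X \ im F φ).card : ℤ) - rhs F φ D X

lemma isGoodEmb_iff (F : (⊤ : SimpleGraph α).Subgraph) (G : SimpleGraph β) (φ : α → β)
    (r : ℝ) (D : ℕ) :
    IsGoodEmb F G φ r D ↔ ∀ X : Finset β, (X.card : ℝ) ≤ r → 0 ≤ slack F G φ D X := by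
  unfold IsGoodEmb slack rhs gam im
  constructor <;> intro h X hX <;> have := h X hX <;> omega

lemma gam_union (G : SimpleGraph β) (X Y : Finset β) :
    gam G (X ∪ Y) = gam G X ∪ gam G Y := by
  ext v; simp only [gam, mem_filter, mem_univ, true_and, mem_union]
  constructor
  · rintro ⟨x, hx | hx, hadj⟩
    exacts [Or.inl ⟨x, hx, hadj⟩, Or.inr ⟨x, hx, hadj⟩]
  · rintro (⟨x, hx, hadj⟩ | ⟨x, hx, hadj⟩)
    exacts [⟨x, Or.inl hx, hadj⟩, ⟨x, Or.inr hx, hadj⟩]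

lemma gam_mono (G : SimpleGraph β) {X Y : Finset β} (h : X ⊆ Y) :
    gam G X ⊆ gam G Y := by
  intro v hv; simp only [gam, mem_filter, mem_univ, true_and] at *
  obtain ⟨x, hx, hadj⟩ := hv; exact ⟨x, h hx, hadj⟩

lemma gam_inter_subset (G : SimpleGraph β) (X Y : Finset β) :
    gam G (X ∩ Y) ⊆ gam G X ∩ gam G Y := by
  intro v hv; simp only [mem_inter]
  exact ⟨gam_mono G inter_subset_left hv, gam_mono G inter_subset_right hv⟩

lemma slack_empty (F : (⊤ : SimpleGraph α).Subgraph) (G : SimpleGraph β)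
    (φ : α → β) (D : ℕ) : slack F G φ D ∅ = 0 := by
  simp [slack, rhs, gam]

section
variable {α β : Type*} [Fintype α] [Fintype β]
variable (F : (⊤ : SimpleGraph α).Subgraph) (G : SimpleGraph β) (φ : α → β) (D : ℕ)

lemma rhs_modular (X Y : Finset β) :
    rhs F φ D (X ∪ Y) + rhs F φ D (X ∩ Y) = rhs F φ D X + rhs F φ D Y := by
  classical
  set S := F.verts.toFinite.toFinset
  have hfU : S.filter (fun a => φ a ∈ X ∪ Y)
      = S.filter (fun a => φ a ∈ X) ∪ S.filter (fun a => φ a ∈ Y) := by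
    ext a; simp only [mem_filter, mem_union]; tauto
  have hfI : S.filter (fun a => φ a ∈ X ∩ Y)
      = S.filter (fun a => φ a ∈ X) ∩ S.filter (fun a => φ a ∈ Y) := by
    ext a; simp only [mem_filter, mem_inter]; tauto
  have e1 : (∑ a ∈ S.filter (fun a => φ a ∈ X ∪ Y), ((D : ℤ) - ((F.neighborSet a).ncard : ℤ)))
      + (∑ a ∈ S.filter (fun a => φ a ∈ X ∩ Y), ((D : ℤ) - ((F.neighborSet a).ncard : ℤ)))
      = (∑ a ∈ S.filter (fun a => φ a ∈ X), ((D : ℤ) - ((F.neighborSet a).ncard : ℤ)))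
      + (∑ a ∈ S.filter (fun a => φ a ∈ Y), ((D : ℤ) - ((F.neighborSet a).ncard : ℤ))) := by
    rw [hfU, hfI, Finset.sum_union_inter]
  have e2 : ((X ∪ Y) \ im F φ).card + ((X ∩ Y) \ im F φ).card
      = (X \ im F φ).card + (Y \ im F φ).card := by
    have h1 : (X ∪ Y) \ im F φ = (X \ im F φ) ∪ (Y \ im F φ) := by
      ext a; simp only [mem_sdiff, mem_union]; tauto
    have h2 : (X ∩ Y) \ im F φ = (X \ im F φ) ∩ (Y \ im F φ) := by
      ext a; simp only [mem_sdiff, mem_inter]; tauto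
    rw [h1, h2, Finset.card_union_add_card_inter]
  have e3 : (im F φ ∩ (X ∪ Y)).card + (im F φ ∩ (X ∩ Y)).card
      = (im F φ ∩ X).card + (im F φ ∩ Y).card := by
    have h1 : im F φ ∩ (X ∪ Y) = (im F φ ∩ X) ∪ (im F φ ∩ Y) := by
      ext a; simp only [mem_inter, mem_union]; tauto
    have h2 : im F φ ∩ (X ∩ Y) = (im F φ ∩ X) ∩ (im F φ ∩ Y) := by
      ext a; simp only [mem_inter]; tauto
    rw [h1, h2, Finset.card_union_add_card_inter]
  have e2' : (((X ∪ Y) \ im F φ).card : ℤ) + (((X ∩ Y) \ im F φ).card : ℤ)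
      = ((X \ im F φ).card : ℤ) + ((Y \ im F φ).card : ℤ) := by exact_mod_cast e2
  have e3' : ((im F φ ∩ (X ∪ Y)).card : ℤ) + ((im F φ ∩ (X ∩ Y)).card : ℤ)
      = ((im F φ ∩ X).card : ℤ) + ((im F φ ∩ Y).card : ℤ) := by exact_mod_cast e3
  unfold rhs
  linear_combination e1 + (D : ℤ) * e2' + e3'

lemma slack_submodular (X Y : Finset β) :
    slack F G φ D (X ∪ Y) + slack F G φ D (X ∩ Y) ≤ slack F G φ D X + slack F G φ D Y := by
  have hL : (gam G (X ∪ Y) \ im F φ).card + (gam G (X ∩ Y) \ im F φ).card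
      ≤ (gam G X \ im F φ).card + (gam G Y \ im F φ).card := by
    have h1 : gam G (X ∪ Y) \ im F φ = (gam G X \ im F φ) ∪ (gam G Y \ im F φ) := by
      rw [gam_union]; ext a; simp only [mem_sdiff, mem_union]; tauto
    have h2 : gam G (X ∩ Y) \ im F φ ⊆ (gam G X \ im F φ) ∩ (gam G Y \ im F φ) := by
      intro a ha
      rw [mem_sdiff] at ha
      have := gam_inter_subset G X Y ha.1
      rw [mem_inter] at this ⊢
      simp only [mem_sdiff]
      exact ⟨⟨this.1, ha.2⟩, ⟨this.2, ha.2⟩⟩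
    calc (gam G (X ∪ Y) \ im F φ).card + (gam G (X ∩ Y) \ im F φ).card
        ≤ ((gam G X \ im F φ) ∪ (gam G Y \ im F φ)).card
          + ((gam G X \ im F φ) ∩ (gam G Y \ im F φ)).card := by
          rw [h1]; exact Nat.add_le_add_left (card_le_card h2) _
      _ = _ := Finset.card_union_add_card_inter _ _
  have hR := rhs_modular F φ D X Y
  have hL' : ((gam G (X ∪ Y) \ im F φ).card : ℤ) + ((gam G (X ∩ Y) \ im F φ).card : ℤ)
      ≤ ((gam G X \ im F φ).card : ℤ) + ((gam G Y \ im F φ).card : ℤ) := by exact_mod_cast hL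
  unfold slack
  linarith

end

section
variable {α β : Type*} [Fintype α] [Fintype β]
variable (F : (⊤ : SimpleGraph α).Subgraph) (G : SimpleGraph β) (φ : α → β) (D s : ℕ)

lemma natcast_bound {s : ℕ} (hs : 1 ≤ s) {n : ℕ} (h : n ≤ 2 * s - 2) :
    (n : ℝ) ≤ 2 * (s : ℝ) - 2 := by
  have h2 : 2 ≤ 2 * s := by omega
  have : ((2 * s - 2 : ℕ) : ℝ) = 2 * (s : ℝ) - 2 := by
    rw [Nat.cast_sub h2]; push_cast; ring
  rw [← this]; exact_mod_cast h

lemma natcast_bound' {s : ℕ} {n : ℕ} (h : (n : ℝ) ≤ 2 * (s : ℝ) - 2) :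
    n ≤ 2 * s - 2 := by
  by_cases hs : 1 ≤ s
  · have h2 : 2 ≤ 2 * s := by omega
    have he : ((2 * s - 2 : ℕ) : ℝ) = 2 * (s : ℝ) - 2 := by
      rw [Nat.cast_sub h2]; push_cast; ring
    rw [← he] at h; exact_mod_cast h
  · exfalso
    have hs0 : s = 0 := by omega
    subst hs0
    have : (0 : ℝ) ≤ (n : ℝ) := Nat.cast_nonneg n
    norm_num at h
    linarith

lemma filter_card_eq_inter (hinj : Set.InjOn φ F.verts) (X : Finset β) :
    (F.verts.toFinite.toFinset.filter (fun a => φ a ∈ X)).card = (im F φ ∩ X).card := by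
  classical
  have himage : im F φ ∩ X = (F.verts.toFinite.toFinset.filter (fun a => φ a ∈ X)).image φ := by
    ext b
    simp only [im, mem_inter, mem_image, mem_filter]
    constructor
    · rintro ⟨⟨a, ha, rfl⟩, hbX⟩; exact ⟨a, ⟨ha, hbX⟩, rfl⟩
    · rintro ⟨a, ⟨ha, hX⟩, rfl⟩; exact ⟨⟨a, ha, rfl⟩, hX⟩
  rw [himage, Finset.card_image_of_injOn]
  intro a ha b hb hab
  simp only [mem_coe, mem_filter, Set.Finite.mem_toFinset] at ha hb
  exact hinj ha.1 hb.1 hab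

lemma rhs_le (hinj : Set.InjOn φ F.verts) (X : Finset β) :
    rhs F φ D X ≤ ((D : ℤ) + 1) * (X.card : ℤ) := by
  have hsum : (∑ a ∈ F.verts.toFinite.toFinset.filter (fun a => φ a ∈ X),
      ((D : ℤ) - ((F.neighborSet a).ncard : ℤ)))
      ≤ (D : ℤ) * ((im F φ ∩ X).card : ℤ) := by
    rw [← filter_card_eq_inter F φ hinj X]
    calc (∑ a ∈ F.verts.toFinite.toFinset.filter (fun a => φ a ∈ X),
        ((D : ℤ) - ((F.neighborSet a).ncard : ℤ)))
        ≤ ∑ _a ∈ F.verts.toFinite.toFinset.filter (fun a => φ a ∈ X), (D : ℤ) := by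
          apply Finset.sum_le_sum
          intro i _
          have : (0 : ℤ) ≤ ((F.neighborSet i).ncard : ℤ) := Int.ofNat_nonneg _
          linarith
      _ = _ := by rw [Finset.sum_const, nsmul_eq_mul, mul_comm]
  have hcards : (X \ im F φ).card + (im F φ ∩ X).card = X.card := by
    rw [Finset.inter_comm]; exact Finset.card_sdiff_add_card_inter X (im F φ)
  have hcards' : ((X \ im F φ).card : ℤ) + ((im F φ ∩ X).card : ℤ) = (X.card : ℤ) := by
    exact_mod_cast hcards
  unfold rhs
  nlinarith [Int.ofNat_nonneg (X \ im F φ).card, Int.ofNat_nonneg (im F φ ∩ X).card,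
    Int.ofNat_nonneg D]

lemma lhs_ge (hGexp : IsExpanding G (2 * (s : ℝ) - 2) ((D : ℝ) + 2))
    (hs : 1 ≤ s) (X : Finset β) (hX : X.card ≤ 2 * s - 2) :
    ((D : ℤ) + 2) * (X.card : ℤ) - ((im F φ).card : ℤ) ≤ ((gam G X \ im F φ).card : ℤ) := by
  have hexpR := hGexp X (natcast_bound hs hX)
  set N := Finset.univ.filter (fun u => u ∉ X ∧ ∃ x ∈ X, G.Adj x u) with hN
  have hNsub : N ⊆ gam G X := by
    intro u hu
    simp only [hN, mem_filter, mem_univ, true_and] at hu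
    simp only [gam, mem_filter, mem_univ, true_and]
    exact hu.2
  have hexpZ : ((D : ℤ) + 2) * (X.card : ℤ) ≤ (N.card : ℤ) := by
    have : ((D : ℝ) + 2) * (X.card : ℝ) ≤ (N.card : ℝ) := hexpR
    exact_mod_cast this
  have hsplit : (gam G X).card ≤ (gam G X \ im F φ).card + (im F φ).card := by
    calc (gam G X).card ≤ ((gam G X \ im F φ) ∪ im F φ).card := by
          apply card_le_card
          intro a ha
          by_cases h : a ∈ im F φ
          · exact mem_union_right _ h
          · exact mem_union_left _ (mem_sdiff.mpr ⟨ha, h⟩)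
      _ ≤ _ := card_union_le _ _
  have hmono : (N.card : ℤ) ≤ ((gam G X).card : ℤ) := by exact_mod_cast card_le_card hNsub
  have hsplit' : ((gam G X).card : ℤ) ≤ ((gam G X \ im F φ).card : ℤ) + ((im F φ).card : ℤ) := by
    exact_mod_cast hsplit
  linarith

lemma tight_small (hGexp : IsExpanding G (2 * (s : ℝ) - 2) ((D : ℝ) + 2))
    (hinj : Set.InjOn φ F.verts) (hs : 1 ≤ s)
    (himcard : (im F φ).card + 1 ≤ s)
    (X : Finset β) (hX : X.card ≤ 2 * s - 2) (ht : slack F G φ D X = 0) :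
    X.card + 1 ≤ s := by
  have h1 := lhs_ge F G φ D s hGexp hs X hX
  have h2 := rhs_le F φ D hinj X
  have h3 : ((gam G X \ im F φ).card : ℤ) = rhs F φ D X := by
    unfold slack at ht; linarith
  have himZ : ((im F φ).card : ℤ) + 1 ≤ (s : ℤ) := by exact_mod_cast himcard
  have : (X.card : ℤ) + 1 ≤ (s : ℤ) := by nlinarith [Int.ofNat_nonneg X.card]
  exact_mod_cast this

end

set_option maxHeartbeats 1600000 in
lemma step {α β : Type*} [Fintype α] [Fintype β]
    (s D : ℕ) (F F' : (⊤ : SimpleGraph α).Subgraph) (G : SimpleGraph β)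
    (v w : α) (hv : v ∉ F.verts) (hw : w ∈ F.verts)
    (hverts : F'.verts = insert v F.verts)
    (hadj : ∀ x y : α, F'.Adj x y ↔ (F.Adj x y ∨ (x = v ∧ y = w) ∨ (x = w ∧ y = v)))
    (hF'deg : ∀ a : α, (F'.neighborSet a).ncard ≤ D)
    (hF'card : F'.verts.ncard ≤ s)
    (hGexp : IsExpanding G (2 * (s : ℝ) - 2) ((D : ℝ) + 2))
    (φ : α → β) (hemb : IsEmbOn F G φ)
    (hgood : IsGoodEmb F G φ (2 * (s : ℝ) - 2) D) :
    ∃ φ' : α → β, IsEmbOn F' G φ' ∧ IsGoodEmb F' G φ' (2 * (s : ℝ) - 2) D ∧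
      ∀ a ∈ F.verts, φ' a = φ a := by
  classical
  have hvw : v ≠ w := fun h => hv (h ▸ hw)
  have hinj : Set.InjOn φ F.verts := hemb.1
  -- neighbor set facts
  have hNv : F'.neighborSet v = {w} := by
    ext y
    simp only [SimpleGraph.Subgraph.mem_neighborSet, hadj, Set.mem_singleton_iff]
    constructor
    · rintro (h | ⟨-, rfl⟩ | ⟨hvw', -⟩)
      · exact absurd h.fst_mem hv
      · rfl
      · exact absurd hvw' hvw
    · rintro rfl; tauto
  have hNw : F'.neighborSet w = insert v (F.neighborSet w) := by
    ext y
    simp only [SimpleGraph.Subgraph.mem_neighborSet, hadj, Set.mem_insert_iff]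
    constructor
    · rintro (h | ⟨h, -⟩ | ⟨-, rfl⟩)
      · exact Or.inr h
      · exact absurd h.symm hvw
      · exact Or.inl rfl
    · rintro (rfl | h) <;> tauto
  have hNa : ∀ a : α, a ≠ v → a ≠ w → F'.neighborSet a = F.neighborSet a := by
    intro a hav haw
    ext y
    simp only [SimpleGraph.Subgraph.mem_neighborSet, hadj]
    constructor
    · rintro (h | ⟨h, -⟩ | ⟨h, -⟩)
      · exact h
      · exact absurd h hav
      · exact absurd h haw
    · exact fun h => Or.inl h
  have hvnotinNw : v ∉ F.neighborSet w := fun h => hv h.symm.fst_mem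
  have hdegw : (F.neighborSet w).ncard + 1 ≤ D := by
    have := hF'deg w
    rw [hNw, Set.ncard_insert_of_notMem hvnotinNw (Set.toFinite _)] at this
    omega
  -- cardinality facts
  have hFcard : F.verts.ncard + 1 ≤ s := by
    have : F'.verts.ncard = F.verts.ncard + 1 := by
      rw [hverts, Set.ncard_insert_of_notMem hv (Set.toFinite _)]
    omega
  have hs2 : 2 ≤ s := by
    have hsub : ({v, w} : Set α) ⊆ F'.verts := by
      rw [hverts]
      rintro x (rfl | rfl)
      · exact Set.mem_insert _ _
      · exact Set.mem_insert_of_mem _ hw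
    have := Set.ncard_le_ncard hsub (Set.toFinite _)
    rw [Set.ncard_pair hvw] at this
    omega
  set S : Finset α := F.verts.toFinite.toFinset with hS
  set Im : Finset β := im F φ with hIm
  have hImcard : Im.card + 1 ≤ s := by
    have h1 : Im.card ≤ S.card := card_image_le
    have h2 : S.card = F.verts.ncard := (Set.ncard_eq_toFinset_card _ _).symm
    omega
  have hφwIm : φ w ∈ Im := by
    simp only [hIm, im, mem_image]
    exact ⟨w, by simpa [hS] using hw, rfl⟩
  have hgood' : ∀ X : Finset β, X.card ≤ 2 * s - 2 → 0 ≤ slack F G φ D X := by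
    intro X hX
    exact (isGoodEmb_iff F G φ _ D).mp hgood X (natcast_bound (by omega) hX)
  -- the union of all tight sets avoiding φ w
  set T : Finset (Finset β) :=
    Finset.univ.filter (fun X => X.card ≤ 2 * s - 2 ∧ slack F G φ D X = 0 ∧ φ w ∉ X) with hT
  set Xs : Finset β := T.sup id with hXs
  have htight_small : ∀ X : Finset β, X.card ≤ 2 * s - 2 → slack F G φ D X = 0 →
      X.card + 1 ≤ s :=
    fun X hX ht => tight_small F G φ D s hGexp hinj (by omega) hImcard X hX ht
  have hP : Xs.card + 1 ≤ s ∧ slack F G φ D Xs = 0 ∧ φ w ∉ Xs := by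
    apply Finset.sup_induction (p := fun X : Finset β => X.card + 1 ≤ s ∧ slack F G φ D X = 0 ∧ φ w ∉ X)
    · refine ⟨?_, slack_empty F G φ D, by simp⟩
      rw [Finset.bot_eq_empty, Finset.card_empty]
      omega
    · rintro X ⟨hX1, hX2, hX3⟩ Y ⟨hY1, hY2, hY3⟩
      have hUcard : (X ∪ Y).card ≤ 2 * s - 2 := by
        have := card_union_le X Y
        omega
      have hIcard : (X ∩ Y).card ≤ 2 * s - 2 := by
        have := card_le_card (inter_subset_left (s₁ := X) (s₂ := Y))
        omega
      have hsub := slack_submodular F G φ D X Y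
      have h1 := hgood' (X ∪ Y) hUcard
      have h2 := hgood' (X ∩ Y) hIcard
      have hU0 : slack F G φ D (X ∪ Y) = 0 := by
        rw [hX2, hY2] at hsub; omega
      refine ⟨htight_small _ hUcard hU0, hU0, ?_⟩
      rw [sup_eq_union, Finset.mem_union]
      push_neg
      exact ⟨hX3, hY3⟩
    · intro X hX
      simp only [hT, mem_filter] at hX
      exact ⟨htight_small X hX.2.1 hX.2.2.1, hX.2.2.1, hX.2.2.2⟩
  obtain ⟨hXscard, hXsslack, hXsw⟩ := hP
  have hXsmax : ∀ X : Finset β, X.card ≤ 2 * s - 2 → slack F G φ D X = 0 → φ w ∉ X →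
      X ⊆ Xs := by
    intro X h1 h2 h3
    have hmem : X ∈ T := by
      rw [hT, Finset.mem_filter]
      exact ⟨Finset.mem_univ _, h1, h2, h3⟩
    exact Finset.le_sup (f := id) hmem
  -- find the good candidate b
  obtain ⟨b, hbadj, hbIm, hbXs⟩ :
      ∃ b : β, G.Adj (φ w) b ∧ b ∉ Im ∧ b ∉ gam G Xs := by
    set Y : Finset β := insert (φ w) Xs with hY
    have hYcard : Y.card ≤ 2 * s - 2 := by
      have h := card_insert_le (φ w) Xs
      rw [hY]
      omega
    have hfilterY : S.filter (fun a => φ a ∈ Y)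
        = insert w (S.filter (fun a => φ a ∈ Xs)) := by
      ext a
      simp only [mem_filter, mem_insert, hY]
      constructor
      · rintro ⟨haS, h | h⟩
        · left; exact hinj (by simpa [hS] using haS) hw h
        · right; exact ⟨haS, h⟩
      · rintro (rfl | ⟨haS, h⟩)
        · exact ⟨by simpa [hS] using hw, Or.inl rfl⟩
        · exact ⟨haS, Or.inr h⟩
    have hwnotfilter : w ∉ S.filter (fun a => φ a ∈ Xs) := by
      simp only [mem_filter]
      exact fun h => hXsw h.2
    have e2 : Y \ Im = Xs \ Im := by
      ext x
      simp only [hY, mem_sdiff, mem_insert]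
      constructor
      · rintro ⟨rfl | h, hn⟩
        · exact absurd hφwIm hn
        · exact ⟨h, hn⟩
      · rintro ⟨h, hn⟩
        exact ⟨Or.inr h, hn⟩
    have e3 : (Im ∩ Y).card = (Im ∩ Xs).card + 1 := by
      have h1 : Im ∩ Y = insert (φ w) (Im ∩ Xs) := by
        ext x
        simp only [hY, mem_inter, mem_insert]
        constructor
        · rintro ⟨hx, rfl | h⟩
          · exact Or.inl rfl
          · exact Or.inr ⟨hx, h⟩
        · rintro (rfl | ⟨h1, h2⟩)
          · exact ⟨hφwIm, Or.inl rfl⟩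
          · exact ⟨h1, Or.inr h2⟩
      rw [h1, card_insert_of_notMem (fun hc => hXsw (mem_inter.mp hc).2)]
    have hRY : rhs F φ D Y
        = rhs F φ D Xs + ((D : ℤ) - ((F.neighborSet w).ncard : ℤ)) + 1 := by
      unfold rhs
      rw [hfilterY, Finset.sum_insert hwnotfilter, e2]
      have e3' : ((Im ∩ Y).card : ℤ) = ((Im ∩ Xs).card : ℤ) + 1 := by exact_mod_cast e3
      rw [e3']
      ring
    have hslackY := hgood' Y hYcard
    set A : Finset β := gam G {φ w} \ Im with hA
    set B : Finset β := gam G Xs \ Im with hB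
    have hLY : (gam G Y \ Im).card ≤ (A \ B).card + B.card := by
      have hgamY : gam G Y = gam G {φ w} ∪ gam G Xs := by
        rw [hY, Finset.insert_eq, gam_union]
      have hsub : gam G Y \ Im ⊆ (A \ B) ∪ B := by
        intro x hx
        rw [mem_sdiff, hgamY, mem_union] at hx
        by_cases hxXs : x ∈ gam G Xs
        · exact mem_union_right _ (mem_sdiff.mpr ⟨hxXs, hx.2⟩)
        · rcases hx.1 with h | h
          · refine mem_union_left _ (mem_sdiff.mpr ⟨mem_sdiff.mpr ⟨h, hx.2⟩, ?_⟩)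
            exact fun hc => hxXs (mem_sdiff.mp hc).1
          · exact absurd h hxXs
      exact le_trans (card_le_card hsub) (card_union_le _ _)
    have hXseq : ((gam G Xs \ Im).card : ℤ) = rhs F φ D Xs := by
      unfold slack at hXsslack
      linarith
    have hdegwZ : ((F.neighborSet w).ncard : ℤ) + 1 ≤ (D : ℤ) := by exact_mod_cast hdegw
    have hA2 : 0 < (A \ B).card := by
      unfold slack at hslackY
      rw [hRY] at hslackY
      have hLY' : ((gam G Y \ Im).card : ℤ) ≤ ((A \ B).card : ℤ) + (B.card : ℤ) := by
        exact_mod_cast hLY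
      have : (1 : ℤ) ≤ ((A \ B).card : ℤ) := by
        rw [hB] at *
        linarith
      exact_mod_cast lt_of_lt_of_le zero_lt_one this
    obtain ⟨b, hb⟩ := Finset.card_pos.mp hA2
    rw [mem_sdiff, hA, hB, mem_sdiff] at hb
    obtain ⟨⟨hb1, hb2⟩, hb3⟩ := hb
    refine ⟨b, ?_, hb2, fun hc => hb3 (mem_sdiff.mpr ⟨hc, hb2⟩)⟩
    simp only [gam, mem_filter, mem_univ, true_and, mem_singleton] at hb1
    obtain ⟨x, rfl, hadjx⟩ := hb1
    exact hadjx
  -- define the extension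
  set φ' : α → β := Function.update φ v b with hφ'
  have hφ'eq : ∀ a ∈ F.verts, φ' a = φ a := by
    intro a ha
    exact Function.update_of_ne (fun h => hv (by rw [← h]; exact ha)) _ _
  have hφ'v : φ' v = b := Function.update_self _ _ _
  have hS' : F'.verts.toFinite.toFinset = insert v S := by
    ext a
    simp only [Set.Finite.mem_toFinset, hverts, Finset.mem_insert, hS, Set.mem_insert_iff]
  have hvS : v ∉ S := by
    simp only [hS, Set.Finite.mem_toFinset]
    exact hv
  have hφmem : ∀ a ∈ F.verts, φ a ∈ Im := by
    intro a ha
    rw [hIm]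
    exact Finset.mem_image.mpr ⟨a, (Set.Finite.mem_toFinset _).mpr ha, rfl⟩
  have hIm' : im F' φ' = insert b Im := by
    show (F'.verts.toFinite.toFinset).image φ' = insert b Im
    rw [hS', Finset.image_insert, hφ'v]
    congr 1
    rw [hIm]
    show S.image φ' = S.image φ
    apply Finset.image_congr
    intro a ha
    simp only [Finset.mem_coe, hS, Set.Finite.mem_toFinset] at ha
    exact hφ'eq a ha
  have hembon : IsEmbOn F' G φ' := by
    constructor
    · rw [hverts]
      intro x hx y hy hxy
      rcases Set.mem_insert_iff.mp hx with rfl | hx'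
      · rcases Set.mem_insert_iff.mp hy with rfl | hy'
        · rfl
        · exfalso
          rw [hφ'v, hφ'eq y hy'] at hxy
          exact hbIm (hxy ▸ hφmem y hy')
      · rcases Set.mem_insert_iff.mp hy with rfl | hy'
        · exfalso
          rw [hφ'v, hφ'eq x hx'] at hxy
          exact hbIm (hxy ▸ hφmem x hx')
        · rw [hφ'eq x hx', hφ'eq y hy'] at hxy
          exact hinj hx' hy' hxy
    · intro x y hxy
      rw [hadj] at hxy
      rcases hxy with h | ⟨hx, hy⟩ | ⟨hx, hy⟩
      · rw [hφ'eq x h.fst_mem, hφ'eq y h.symm.fst_mem]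
        exact hemb.2 x y h
      · rw [hx, hy, hφ'v, hφ'eq w hw]
        exact hbadj.symm
      · rw [hx, hy, hφ'v, hφ'eq w hw]
        exact hbadj
  refine ⟨φ', hembon, ?_, hφ'eq⟩
  rw [isGoodEmb_iff]
  intro X hXr
  have hX : X.card ≤ 2 * s - 2 := natcast_bound' hXr
  -- LHS identity
  have hLid : ((gam G X \ im F' φ').card : ℤ)
      = ((gam G X \ Im).card : ℤ) - (if b ∈ gam G X then 1 else 0) := by
    rw [hIm']
    by_cases hbG : b ∈ gam G X
    · have h1 : gam G X \ insert b Im = (gam G X \ Im).erase b := by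
        ext x
        simp only [mem_sdiff, mem_insert, mem_erase]
        constructor
        · rintro ⟨h1, h2⟩
          exact ⟨fun hc => h2 (Or.inl hc), h1, fun hc => h2 (Or.inr hc)⟩
        · rintro ⟨h1, h2, h3⟩
          refine ⟨h2, ?_⟩
          rintro (rfl | hc)
          · exact h1 rfl
          · exact h3 hc
      have hbmem : b ∈ gam G X \ Im := mem_sdiff.mpr ⟨hbG, hbIm⟩
      rw [h1, card_erase_of_mem hbmem, if_pos hbG]
      have hpos : 0 < (gam G X \ Im).card := card_pos.mpr ⟨b, hbmem⟩
      omega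
    · have h1 : gam G X \ insert b Im = gam G X \ Im := by
        ext x
        simp only [mem_sdiff, mem_insert]
        constructor
        · rintro ⟨h1, h2⟩
          exact ⟨h1, fun hc => h2 (Or.inr hc)⟩
        · rintro ⟨h1, h2⟩
          refine ⟨h1, ?_⟩
          rintro (rfl | hc)
          · exact hbG h1
          · exact h2 hc
      rw [h1, if_neg hbG]
      ring
  -- RHS identity
  have hfiltcongr : S.filter (fun a => φ' a ∈ X) = S.filter (fun a => φ a ∈ X) := by
    apply Finset.filter_congr
    intro a ha
    rw [hφ'eq a (by simpa only [hS, Set.Finite.mem_toFinset] using ha)]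
  have hvnotfilt : v ∉ S.filter (fun a => φ a ∈ X) := fun hc => hvS (mem_filter.mp hc).1
  have hsum_filt : (∑ a ∈ S.filter (fun a => φ a ∈ X),
        ((D : ℤ) - ((F'.neighborSet a).ncard : ℤ)))
      = (∑ a ∈ S.filter (fun a => φ a ∈ X), ((D : ℤ) - ((F.neighborSet a).ncard : ℤ)))
        - (if φ w ∈ X then 1 else 0) := by
    have key : ∀ a ∈ S.filter (fun a => φ a ∈ X),
        ((D : ℤ) - ((F'.neighborSet a).ncard : ℤ))
        = ((D : ℤ) - ((F.neighborSet a).ncard : ℤ)) - (if a = w then (1 : ℤ) else 0) := by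
      intro a ha
      have haS : a ∈ F.verts := by
        simpa only [hS, Set.Finite.mem_toFinset] using (mem_filter.mp ha).1
      have hav : a ≠ v := fun hc => hv (hc ▸ haS)
      by_cases haw : a = w
      · subst haw
        rw [hNw, Set.ncard_insert_of_notMem hvnotinNw (Set.toFinite _), if_pos rfl]
        push_cast
        ring
      · rw [hNa a hav haw, if_neg haw]
        ring
    rw [Finset.sum_congr rfl key, Finset.sum_sub_distrib]
    congr 1
    rw [Finset.sum_ite_eq' (S.filter (fun a => φ a ∈ X)) w (fun _ => (1 : ℤ))]
    have : w ∈ S.filter (fun a => φ a ∈ X) ↔ φ w ∈ X := by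
      simp only [mem_filter, hS, Set.Finite.mem_toFinset]
      exact ⟨fun h => h.2, fun h => ⟨hw, h⟩⟩
    by_cases hwX : φ w ∈ X
    · rw [if_pos (this.mpr hwX), if_pos hwX]
    · rw [if_neg (fun hc => hwX (this.mp hc)), if_neg hwX]
  have hdegv : ((F'.neighborSet v).ncard : ℤ) = 1 := by
    rw [hNv, Set.ncard_singleton]
    norm_num
  have hsd : ((X \ insert b Im).card : ℤ)
      = ((X \ Im).card : ℤ) - (if b ∈ X then 1 else 0) := by
    by_cases hbX : b ∈ X
    · have h1 : X \ insert b Im = (X \ Im).erase b := by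
        ext x
        simp only [mem_sdiff, mem_insert, mem_erase]
        constructor
        · rintro ⟨h1, h2⟩
          exact ⟨fun hc => h2 (Or.inl hc), h1, fun hc => h2 (Or.inr hc)⟩
        · rintro ⟨h1, h2, h3⟩
          refine ⟨h2, ?_⟩
          rintro (rfl | hc)
          · exact h1 rfl
          · exact h3 hc
      have hbmem : b ∈ X \ Im := mem_sdiff.mpr ⟨hbX, hbIm⟩
      rw [h1, card_erase_of_mem hbmem, if_pos hbX]
      have hpos : 0 < (X \ Im).card := card_pos.mpr ⟨b, hbmem⟩
      omega
    · have h1 : X \ insert b Im = X \ Im := by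
        ext x
        simp only [mem_sdiff, mem_insert]
        constructor
        · rintro ⟨h1, h2⟩
          exact ⟨h1, fun hc => h2 (Or.inr hc)⟩
        · rintro ⟨h1, h2⟩
          refine ⟨h1, ?_⟩
          rintro (rfl | hc)
          · exact hbX h1
          · exact h2 hc
      rw [h1, if_neg hbX]
      ring
  have hin : ((insert b Im ∩ X).card : ℤ)
      = ((Im ∩ X).card : ℤ) + (if b ∈ X then 1 else 0) := by
    by_cases hbX : b ∈ X
    · have h1 : insert b Im ∩ X = insert b (Im ∩ X) := by
        ext x
        simp only [mem_inter, mem_insert]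
        constructor
        · rintro ⟨rfl | h1, h2⟩
          · exact Or.inl rfl
          · exact Or.inr ⟨h1, h2⟩
        · rintro (rfl | ⟨h1, h2⟩)
          · exact ⟨Or.inl rfl, hbX⟩
          · exact ⟨Or.inr h1, h2⟩
      rw [h1, card_insert_of_notMem (fun hc => hbIm (mem_inter.mp hc).1), if_pos hbX]
      push_cast
      ring
    · have h1 : insert b Im ∩ X = Im ∩ X := by
        ext x
        simp only [mem_inter, mem_insert]
        constructor
        · rintro ⟨rfl | h1, h2⟩
          · exact absurd h2 hbX
          · exact ⟨h1, h2⟩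
        · rintro ⟨h1, h2⟩
          exact ⟨Or.inr h1, h2⟩
      rw [h1, if_neg hbX]
      ring
  have hRid : rhs F' φ' D X = rhs F φ D X - (if φ w ∈ X then 1 else 0) := by
    unfold rhs
    rw [hIm', hS', Finset.filter_insert, hφ'v, hsd, hin]
    by_cases hbX : b ∈ X
    · rw [if_pos hbX, Finset.sum_insert (by rw [hfiltcongr]; exact hvnotfilt), hfiltcongr,
        hsum_filt, hdegv]
      split_ifs <;> ring
    · rw [if_neg hbX, hfiltcongr, hsum_filt]
      split_ifs <;> ring
  have hslack' : slack F' G φ' D X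
      = slack F G φ D X - (if b ∈ gam G X then 1 else 0) + (if φ w ∈ X then 1 else 0) := by
    unfold slack
    rw [hLid, hRid]
    ring
  have h0 := hgood' X hX
  by_cases hbG : b ∈ gam G X
  · by_cases hwX : φ w ∈ X
    · rw [hslack', if_pos hbG, if_pos hwX]
      linarith
    · have h1 : slack F G φ D X ≠ 0 := by
        intro hc
        exact hbXs (gam_mono G (hXsmax X hX hc hwX) hbG)
      rw [hslack', if_pos hbG, if_neg hwX]
      omega
  · rw [hslack', if_neg hbG]
    split_ifs <;> linarith

lemma chain_mono {α : Type*} {F F' : (⊤ : SimpleGraph α).Subgraph}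
    (h : Relation.ReflTransGen AddLeaf F F') :
    F.verts ⊆ F'.verts ∧ ∀ x y : α, F.Adj x y → F'.Adj x y := by
  induction h with
  | refl => exact ⟨subset_rfl, fun _ _ h => h⟩
  | tail _ hbc ih =>
    obtain ⟨v, w, hv, hw, hverts, hadj⟩ := hbc
    constructor
    · intro x hx
      rw [hverts]
      exact Set.mem_insert_of_mem _ (ih.1 hx)
    · intro x y hxy
      rw [hadj]
      exact Or.inl (ih.2 x y hxy)

theorem aux {α β : Type*} [Fintype α] [Fintype β]
    (s D : ℕ) (F' : (⊤ : SimpleGraph α).Subgraph) (G : SimpleGraph β)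
    (hGexp : IsExpanding G (2 * (s : ℝ) - 2) ((D : ℝ) + 2))
    (hF'card : F'.verts.ncard ≤ s)
    (hF'deg : ∀ a : α, (F'.neighborSet a).ncard ≤ D) :
    ∀ F : (⊤ : SimpleGraph α).Subgraph, Relation.ReflTransGen AddLeaf F F' →
    ∀ φ : α → β, IsEmbOn F G φ → IsGoodEmb F G φ (2 * (s : ℝ) - 2) D →
    ∃ φ' : α → β, IsEmbOn F' G φ' ∧ IsGoodEmb F' G φ' (2 * (s : ℝ) - 2) D ∧
      ∀ a ∈ F.verts, φ' a = φ a := by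
  intro F hchain
  induction hchain using Relation.ReflTransGen.head_induction_on with
  | refl =>
    intro φ h1 h2
    exact ⟨φ, h1, h2, fun _ _ => rfl⟩
  | @head F₀ Fmid hstep hrest ih =>
    intro φ hembφ hgoodφ
    obtain ⟨v, w, hv, hw, hverts, hadj⟩ := hstep
    have hmono := chain_mono hrest
    have hmiddeg : ∀ a : α, (Fmid.neighborSet a).ncard ≤ D := by
      intro a
      refine le_trans (Set.ncard_le_ncard ?_ (Set.toFinite _)) (hF'deg a)
      intro y hy
      exact hmono.2 a y hy
    have hmidcard : Fmid.verts.ncard ≤ s :=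
      le_trans (Set.ncard_le_ncard hmono.1 (Set.toFinite _)) hF'card
    obtain ⟨φ₁, h1, h2, h3⟩ := step s D F₀ Fmid G v w hv hw hverts hadj hmiddeg hmidcard
      hGexp φ hembφ hgoodφ
    obtain ⟨φ'', g1, g2, g3⟩ := ih φ₁ h1 h2
    refine ⟨φ'', g1, g2, ?_⟩
    intro a ha
    rw [g3 a (by rw [hverts]; exact Set.mem_insert_of_mem _ ha), h3 a ha]


end FPaux
end FPauxSection

/-- Friedman–Pippenger with rollbacks: let `F` have maximum degree at most `D` and fewer than
`s` vertices, let `G` be `(2s−2, D+2)`-expanding, and let `φ : F ↪ G` be a `(2s−2, D)`-good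
embedding. Then for every graph `F'` with at most `s` vertices and maximum degree at most `D`
obtained from `F` by successively adding vertices of degree `1`, there is a `(2s−2, D)`-good
embedding `φ' : F' ↪ G` extending `φ`. -/
theorem friedman_pippenger_with_rollbacks {α β : Type*} [Fintype α] [Fintype β]
    (s D : ℕ) (F F' : (⊤ : SimpleGraph α).Subgraph) (G : SimpleGraph β)
    (hFdeg : ∀ a : α, (F.neighborSet a).ncard ≤ D)
    (hFcard : F.verts.ncard < s)
    (hGexp : IsExpanding G (2 * (s : ℝ) - 2) ((D : ℝ) + 2))
    (φ : α → β) (hemb : IsEmbOn F G φ)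
    (hgood : IsGoodEmb F G φ (2 * (s : ℝ) - 2) D)
    (hchain : Relation.ReflTransGen AddLeaf F F')
    (hF'card : F'.verts.ncard ≤ s)
    (hF'deg : ∀ a : α, (F'.neighborSet a).ncard ≤ D) :
    ∃ φ' : α → β, IsEmbOn F' G φ' ∧ IsGoodEmb F' G φ' (2 * (s : ℝ) - 2) D ∧
      ∀ a ∈ F.verts, φ' a = φ a :=
  FPaux.aux s D F' G hGexp hF'card hF'deg F hchain φ hemb hgood
end

section
/- Let s, D ∈ ℕ, let G and F be graphs with maximum degree of F at most D, and let φ : F ↪ G be an (s,D)-good embedding. Then for every graph F' obtained from F by successively removing vertices of degree 1, the restriction of φ to F' is also an (s,D)-good embedding in G. -/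
open scoped Classical

lemma addLeaf_step {α β : Type*} [Fintype α] [Fintype β]
    (s : ℝ) (D : ℕ) (F₁ F₂ : (⊤ : SimpleGraph α).Subgraph) (G : SimpleGraph β)
    (φ : α → β)
    (hdeg : ∀ a, (F₁.neighborSet a).ncard ≤ D)
    (hemb : IsEmbOn F₁ G φ) (hgood : IsGoodEmb F₁ G φ s D)
    (h : AddLeaf F₂ F₁) :
    (∀ a, (F₂.neighborSet a).ncard ≤ D) ∧ IsEmbOn F₂ G φ ∧ IsGoodEmb F₂ G φ s D := by
  obtain ⟨v, w, hvn, hwm, hverts, hadj⟩ := h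
  have hvw : v ≠ w := fun h => hvn (h ▸ hwm)
  have hsubV : F₂.verts ⊆ F₁.verts := by rw [hverts]; exact Set.subset_insert _ _
  have hsubA : ∀ x y, F₂.Adj x y → F₁.Adj x y := fun x y hxy => (hadj x y).2 (Or.inl hxy)
  have hnsub : ∀ a, F₂.neighborSet a ⊆ F₁.neighborSet a := fun a y hy => hsubA a y hy
  have hdeg₂ : ∀ a, (F₂.neighborSet a).ncard ≤ D :=
    fun a => le_trans (Set.ncard_le_ncard (hnsub a) (Set.toFinite _)) (hdeg a)
  have hemb₂ : IsEmbOn F₂ G φ :=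
    ⟨hemb.1.mono hsubV, fun a b hab => hemb.2 a b (hsubA _ _ hab)⟩
  refine ⟨hdeg₂, hemb₂, ?_⟩
  intro X hX
  set V₂f := F₂.verts.toFinite.toFinset with hV₂f
  have hmemV₂ : ∀ a, a ∈ V₂f ↔ a ∈ F₂.verts := fun a => Set.Finite.mem_toFinset _
  have hV : F₁.verts.toFinite.toFinset = insert v V₂f := by
    ext a
    rw [Set.Finite.mem_toFinset, hverts, Set.mem_insert_iff, Finset.mem_insert, hmemV₂]
  have hvV₂ : v ∉ V₂f := by simp [hmemV₂, hvn]
  have hwV₂ : w ∈ V₂f := by simp [hmemV₂, hwm]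
  set I₂ := V₂f.image φ with hI₂
  have hvF₁ : v ∈ F₁.verts := by rw [hverts]; exact Set.mem_insert _ _
  have hφvI : φ v ∉ I₂ := by
    intro hmem
    obtain ⟨a, ha, hfa⟩ := Finset.mem_image.1 hmem
    have : a = v := hemb.1 (hsubV ((hmemV₂ a).1 ha)) hvF₁ hfa
    exact hvV₂ (this ▸ ha)
  have hI : F₁.verts.toFinite.toFinset.image φ = insert (φ v) I₂ := by
    rw [hV, Finset.image_insert]
  -- neighbor sets
  have hNv₁ : F₁.neighborSet v = {w} := by
    ext y
    simp only [SimpleGraph.Subgraph.mem_neighborSet, hadj, Set.mem_singleton_iff]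
    constructor
    · rintro (h | ⟨-, rfl⟩ | ⟨h, -⟩)
      · exact absurd h.fst_mem hvn
      · rfl
      · exact absurd h hvw
    · rintro rfl; tauto
  have hvNw₂ : v ∉ F₂.neighborSet w := fun h => hvn (SimpleGraph.Subgraph.Adj.snd_mem h)
  have hNw : F₁.neighborSet w = insert v (F₂.neighborSet w) := by
    ext y
    simp only [SimpleGraph.Subgraph.mem_neighborSet, hadj, Set.mem_insert_iff]
    constructor
    · rintro (h | ⟨h, -⟩ | ⟨-, rfl⟩)
      · exact Or.inr h
      · exact absurd h.symm hvw
      · exact Or.inl rfl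
    · rintro (rfl | h)
      · tauto
      · exact Or.inl h
  have hdegw : (F₁.neighborSet w).ncard = (F₂.neighborSet w).ncard + 1 := by
    rw [hNw, Set.ncard_insert_of_notMem hvNw₂ (Set.toFinite _)]
  have hdega : ∀ a, a ≠ v → a ≠ w → F₂.neighborSet a = F₁.neighborSet a := by
    intro a hav haw
    ext y
    simp only [SimpleGraph.Subgraph.mem_neighborSet, hadj]
    constructor
    · exact fun h => Or.inl h
    · rintro (h | ⟨rfl, -⟩ | ⟨rfl, -⟩)
      · exact h
      · exact absurd rfl hav
      · exact absurd rfl haw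
  have hdegv₁ : (F₁.neighborSet v).ncard = 1 := by rw [hNv₁]; simp
  -- sum equality
  have hsum : ∑ a ∈ (F₁.verts.toFinite.toFinset).filter (fun a => φ a ∈ X),
        ((D : ℤ) - ((F₁.neighborSet a).ncard : ℤ))
      = (∑ a ∈ V₂f.filter (fun a => φ a ∈ X),
          ((D : ℤ) - ((F₂.neighborSet a).ncard : ℤ)))
        - (if φ w ∈ X then 1 else 0)
        + (if φ v ∈ X then (D : ℤ) - 1 else 0) := by
    have hm : ∑ a ∈ V₂f.filter (fun a => φ a ∈ X),
          ((D : ℤ) - ((F₁.neighborSet a).ncard : ℤ))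
        = (∑ a ∈ V₂f.filter (fun a => φ a ∈ X),
            ((D : ℤ) - ((F₂.neighborSet a).ncard : ℤ)))
          - (if φ w ∈ X then 1 else 0) := by
      have : ∀ a ∈ V₂f.filter (fun a => φ a ∈ X),
          ((D : ℤ) - ((F₁.neighborSet a).ncard : ℤ))
          = ((D : ℤ) - ((F₂.neighborSet a).ncard : ℤ)) - (if a = w then 1 else 0) := by
        intro a ha
        have haV : a ∈ V₂f := (Finset.mem_filter.1 ha).1
        have hav : a ≠ v := fun h => hvV₂ (h ▸ haV)
        by_cases haw : a = w
        · subst haw; rw [hdegw, if_pos rfl]; push_cast; ring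
        · rw [hdega a hav haw]; simp [haw]
      rw [Finset.sum_congr rfl this, Finset.sum_sub_distrib, Finset.sum_ite_eq' _ w]
      simp [hwV₂]
    rw [hV, Finset.filter_insert]
    by_cases hvx : φ v ∈ X
    · rw [if_pos hvx, Finset.sum_insert (by simp [hvV₂])]
      rw [hm, hdegv₁, if_pos hvx]
      push_cast; ring
    · rw [if_neg hvx, hm, if_neg hvx]
      ring
  -- card equalities
  set N := Finset.univ.filter (fun u => ∃ x ∈ X, G.Adj x u) with hN
  have hc_gen : ∀ Y : Finset β, ((Y \ I₂).card : ℤ)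
      = ((Y \ insert (φ v) I₂).card : ℤ) + (if φ v ∈ Y then 1 else 0) := by
    intro Y
    have heq : Y \ insert (φ v) I₂ = (Y \ I₂).erase (φ v) := by
      ext x; simp [Finset.mem_sdiff, Finset.mem_insert, Finset.mem_erase]; tauto
    by_cases hvy : φ v ∈ Y
    · have hmem : φ v ∈ Y \ I₂ := Finset.mem_sdiff.2 ⟨hvy, hφvI⟩
      have := Finset.card_erase_add_one hmem
      rw [heq, if_pos hvy]
      push_cast [← this]
      ring
    · have : Y \ insert (φ v) I₂ = Y \ I₂ := by
        ext x; simp only [Finset.mem_sdiff, Finset.mem_insert]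
        constructor
        · rintro ⟨h1, h2⟩; exact ⟨h1, fun h => h2 (Or.inr h)⟩
        · rintro ⟨h1, h2⟩; exact ⟨h1, fun h => h.elim (fun he => hvy (he ▸ h1)) h2⟩
      rw [this, if_neg hvy]; ring
  have hc2 : (((insert (φ v) I₂) ∩ X).card : ℤ)
      = ((I₂ ∩ X).card : ℤ) + (if φ v ∈ X then 1 else 0) := by
    by_cases hvx : φ v ∈ X
    · rw [Finset.insert_inter_of_mem hvx,
        Finset.card_insert_of_notMem (fun h => hφvI (Finset.mem_inter.1 h).1), if_pos hvx]
      push_cast; ring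
    · rw [Finset.insert_inter_of_notMem hvx, if_neg hvx]; ring
  have himp : φ w ∈ X → φ v ∈ N := by
    intro hwx
    have hAdj : F₁.Adj w v := (hadj w v).2 (Or.inr (Or.inr ⟨rfl, rfl⟩))
    exact Finset.mem_filter.2 ⟨Finset.mem_univ _, ⟨φ w, hwx, hemb.2 w v hAdj⟩⟩
  have hind : (if φ w ∈ X then (1:ℤ) else 0) ≤ (if φ v ∈ N then 1 else 0) := by
    by_cases hwx : φ w ∈ X
    · simp [hwx, himp hwx]
    · simp [hwx]; positivity
  have hg := hgood X hX
  rw [hI, hsum, hc2, ← hN] at hg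
  rw [hc_gen X, hc_gen N]
  by_cases hwX : φ w ∈ X
  · have hvN : φ v ∈ N := himp hwX
    by_cases hvX : φ v ∈ X <;>
      simp only [hwX, hvN, hvX, if_true, if_false, if_pos, if_neg, not_false_iff] at hg ⊢ <;>
      linarith
  · by_cases hvX : φ v ∈ X <;> by_cases hvN : φ v ∈ N <;>
      simp only [hwX, hvX, hvN, if_true, if_false, if_pos, if_neg, not_false_iff] at hg ⊢ <;>
      linarith

/-- Rollback lemma: if `φ : F ↪ G` is an `(s,D)`-good embedding of a graph `F` of maximum
degree at most `D`, then for every `F'` obtained from `F` by successively removing vertices of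
degree `1`, the restriction of `φ` to `F'` is also `(s,D)`-good in `G`. -/
theorem rollback_preserves_goodness {α β : Type*} [Fintype α] [Fintype β]
    (s D : ℕ) (F F' : (⊤ : SimpleGraph α).Subgraph) (G : SimpleGraph β)
    (hFdeg : ∀ a : α, (F.neighborSet a).ncard ≤ D)
    (φ : α → β) (hemb : IsEmbOn F G φ)
    (hgood : IsGoodEmb F G φ (s : ℝ) D)
    (hchain : Relation.ReflTransGen (fun F₁ F₂ => AddLeaf F₂ F₁) F F') :
    IsEmbOn F' G φ ∧ IsGoodEmb F' G φ (s : ℝ) D := by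
  have key : (∀ a : α, (F'.neighborSet a).ncard ≤ D) ∧ IsEmbOn F' G φ ∧
      IsGoodEmb F' G φ (s : ℝ) D := by
    induction hchain with
    | refl => exact ⟨hFdeg, hemb, hgood⟩
    | tail _ hleaf ih => exact addLeaf_step _ _ _ _ _ _ ih.1 ih.2.1 ih.2.2 hleaf
  exact ⟨key.2.1, key.2.2⟩
end

section
/- Let d, m and M be positive integers. Assume that H is a non-empty graph satisfying: (1) for every U ⊆ V(H) with 0 < |U| ≤ m, |N_H(U)| ≥ d|U| + 1; and (2) for every U ⊆ V(H) with m < |U| ≤ 2m, |N_H(U)| ≥ d|U| + M. Then H contains a copy of every tree T with M vertices and maximum degree at most d. -/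
/-!
Embed `T` one vertex at a time along a growing subtree `S`, keeping Haxell's invariant: with
`F = f(S)`, every `U ⊆ V(H)` with `|U| ≤ 2m` has at least `∑_{v ∈ U} demand v` neighbours outside
`F`, where a vertex outside `F` demands `d` and `f(s)` demands the number of neighbours of `s` not
yet embedded. Call `U` critical when equality holds. Since `U ↦ |N(U) ∖ F|` is submodular and the
demand is modular, the critical sets avoiding the image `u` of the parent of the next tree vertex
are closed under union, and hypothesis (2) keeps them of size at most `m`. Their union `C` leaves
`u` a free neighbour `y ∉ C ∪ N(C)`, as otherwise `C ∪ {u}` would violate the invariant, and mapping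
the new vertex to `y` preserves the invariant. Hypotheses (1) and (2) give the invariant for a
single embedded vertex.
-/

open scoped Classical

/-- `N_H(U)`: the set of vertices of `V(H) ∖ U` having a neighbor in `U`. -/
noncomputable def extNbhd {V : Type*} [Fintype V] (H : SimpleGraph V) (U : Finset V) :
    Finset V :=
  (Finset.univ \ U).filter (fun v => ∃ u ∈ U, H.Adj u v)

open Finset SimpleGraph

section ExtNbhd

variable {V : Type*} [Fintype V] (H : SimpleGraph V)

lemma mem_extNbhd {U : Finset V} {v : V} : v ∈ extNbhd H U ↔ v ∉ U ∧ ∃ u ∈ U, H.Adj u v := by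
  simp [extNbhd]

@[simp]
lemma extNbhd_empty : extNbhd H ∅ = ∅ := by
  ext v
  simp [mem_extNbhd]

noncomputable def closedNbhd (U : Finset V) : Finset V :=
  univ.filter fun v => v ∈ U ∨ ∃ u ∈ U, H.Adj u v

lemma mem_closedNbhd {U : Finset V} {v : V} :
    v ∈ closedNbhd H U ↔ v ∈ U ∨ ∃ u ∈ U, H.Adj u v := by
  simp [closedNbhd]

lemma closedNbhd_union (A B : Finset V) :
    closedNbhd H (A ∪ B) = closedNbhd H A ∪ closedNbhd H B := by
  ext v
  simp only [mem_closedNbhd, mem_union, or_and_right, exists_or]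
  grind

lemma closedNbhd_mono {A B : Finset V} (h : A ⊆ B) : closedNbhd H A ⊆ closedNbhd H B := by
  intro v
  simp only [mem_closedNbhd]
  rintro (hv | ⟨u, hu, huv⟩)
  exacts [Or.inl (h hv), Or.inr ⟨u, h hu, huv⟩]

lemma card_closedNbhd_sdiff (U F : Finset V) :
    #(closedNbhd H U \ F) = #(U \ F) + #(extNbhd H U \ F) := by
  rw [← card_union_of_disjoint]
  · congr 1
    ext v
    simp only [mem_sdiff, mem_union, mem_closedNbhd, mem_extNbhd]
    tauto
  · exact disjoint_left.2 fun v hv hv' => (mem_extNbhd H).1 (mem_sdiff.1 hv').1 |>.1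
      (mem_sdiff.1 hv).1

lemma card_extNbhd_sdiff_union_add_inter_le (F A B : Finset V) :
    #(extNbhd H (A ∪ B) \ F) + #(extNbhd H (A ∩ B) \ F) ≤
      #(extNbhd H A \ F) + #(extNbhd H B \ F) := by
  have hclosed : #(closedNbhd H (A ∪ B) \ F) + #(closedNbhd H (A ∩ B) \ F) ≤
      #(closedNbhd H A \ F) + #(closedNbhd H B \ F) := by
    rw [closedNbhd_union, union_sdiff_distrib, ← card_union_add_card_inter (closedNbhd H A \ F)]
    gcongr
    exact (sdiff_subset_sdiff (subset_inter (closedNbhd_mono H inter_subset_left)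
      (closedNbhd_mono H inter_subset_right)) subset_rfl).trans inf_sdiff.le
  have hmodular : #((A ∪ B) \ F) + #((A ∩ B) \ F) = #(A \ F) + #(B \ F) := by
    rw [union_sdiff_distrib, show (A ∩ B) \ F = A \ F ∩ (B \ F) from inf_sdiff,
      card_union_add_card_inter]
  simp only [card_closedNbhd_sdiff] at hclosed
  omega

end ExtNbhd

lemma SimpleGraph.Connected.exists_adj_mem_notMem {γ : Type*} {T : SimpleGraph γ}
    (hT : T.Connected) {S : Set γ} {a b : γ} (ha : a ∈ S) (hb : b ∉ S) :
    ∃ x ∈ S, ∃ y ∉ S, T.Adj x y := by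
  obtain ⟨d, -, hd⟩ := (hT.preconnected a b).some.exists_boundary_dart S ha hb
  exact ⟨d.fst, hd.1, d.snd, hd.2, d.adj⟩

lemma SimpleGraph.IsAcyclic.eq_of_adj_of_notMem_support {γ : Type*} {T : SimpleGraph γ}
    (hT : T.IsAcyclic) {t a b : γ} (hta : T.Adj t a) (htb : T.Adj t b) (p : T.Walk b a)
    (ht : t ∉ p.support) : a = b := by
  have hpath : (Walk.cons htb p.bypass).IsPath :=
    p.bypass_isPath.cons fun h => ht (p.support_bypass_subset_support h)
  simpa using hT.eq_snd_of_adj_start hpath hta (Walk.end_mem_support _)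

lemma Finset.image_insert_update {γ V : Type*} [DecidableEq V] {S : Finset γ} {t : γ}
    (f : γ → V) (y : V) (ht : t ∉ S) :
    (insert t S).image (Function.update f t y) = insert y (S.image f) := by
  rw [image_insert, Function.update_self]
  congr 1
  exact image_congr fun s hs => Function.update_of_ne (ne_of_mem_of_not_mem hs ht) y f

lemma Set.InjOn.update_insert {γ V : Type*} {S : Finset γ} {f : γ → V} {t : γ} {y : V}
    (hf : Set.InjOn f S) (ht : t ∉ S) (hy : y ∉ S.image f) :
    Set.InjOn (Function.update f t y) ((insert t S : Finset γ) : Set γ) := by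
  have heq : Set.EqOn (Function.update f t y) f S := fun s hs =>
    Function.update_of_ne (ne_of_mem_of_not_mem hs ht) y f
  rw [coe_insert, Set.injOn_insert (by simpa using ht), heq.image_eq, Function.update_self]
  exact ⟨hf.congr heq.symm, by simpa using hy⟩

namespace Haxell

section Critical

variable {V : Type*} [Fintype V] {H : SimpleGraph V} {F : Finset V} {w : V → ℕ} {m : ℕ}

def DemandMet (H : SimpleGraph V) (F : Finset V) (w : V → ℕ) (m : ℕ) : Prop :=
  ∀ U : Finset V, #U ≤ 2 * m → ∑ v ∈ U, w v ≤ #(extNbhd H U \ F)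

def DemandMetStrictlyAbove (H : SimpleGraph V) (F : Finset V) (w : V → ℕ) (m : ℕ) : Prop :=
  ∀ U : Finset V, m < #U → #U ≤ 2 * m → ∑ v ∈ U, w v < #(extNbhd H U \ F)

def IsCritical (H : SimpleGraph V) (F : Finset V) (w : V → ℕ) (m : ℕ) (U : Finset V) : Prop :=
  #U ≤ 2 * m ∧ ∑ v ∈ U, w v = #(extNbhd H U \ F)

lemma isCritical_empty : IsCritical H F w m ∅ := by
  simp [IsCritical]

lemma IsCritical.card_le (hlarge : DemandMetStrictlyAbove H F w m) {U : Finset V}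
    (hU : IsCritical H F w m U) : #U ≤ m := by
  by_contra! h
  exact (hlarge U h hU.1).ne hU.2

lemma IsCritical.union (hle : DemandMet H F w m) (hlarge : DemandMetStrictlyAbove H F w m)
    {A B : Finset V} (hA : IsCritical H F w m A) (hB : IsCritical H F w m B) :
    IsCritical H F w m (A ∪ B) := by
  have hAm := hA.card_le hlarge
  have hBm := hB.card_le hlarge
  have hunion : #(A ∪ B) ≤ 2 * m := (card_union_le A B).trans (by omega)
  have hinter := hle (A ∩ B) ((card_le_card inter_subset_left).trans (by omega))
  have hsub := card_extNbhd_sdiff_union_add_inter_le H F A B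
  have hmod : ∑ v ∈ A ∪ B, w v + ∑ v ∈ A ∩ B, w v = ∑ v ∈ A, w v + ∑ v ∈ B, w v :=
    sum_union_inter
  refine ⟨hunion, le_antisymm (hle _ hunion) ?_⟩
  have := hA.2
  have := hB.2
  omega

lemma DemandMet.exists_maximal_isCritical (hle : DemandMet H F w m)
    (hlarge : DemandMetStrictlyAbove H F w m) (u : V) :
    ∃ C, u ∉ C ∧ IsCritical H F w m C ∧ ∀ U, u ∉ U → IsCritical H F w m U → U ⊆ C := by
  let P : Finset V → Prop := fun U => u ∉ U ∧ IsCritical H F w m U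
  have hsup : P ((univ.filter P).sup id) :=
    sup_induction ⟨notMem_empty u, isCritical_empty⟩
      (fun A hA B hB => ⟨by simp [hA.1, hB.1], hA.2.union hle hlarge hB.2⟩)
      (fun U hU => (mem_filter.1 hU).2)
  exact ⟨_, hsup.1, hsup.2, fun U hu hU => le_sup (f := id) (mem_filter.2 ⟨mem_univ U, hu, hU⟩)⟩

lemma DemandMet.exists_mem_extNbhd_singleton_notMem_extNbhd_isCritical (hle : DemandMet H F w m)
    (hlarge : DemandMetStrictlyAbove H F w m) (hm : 0 < m) {u : V} (hu : 0 < w u) :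
    ∃ y ∈ extNbhd H {u} \ F, ∀ U, u ∉ U → IsCritical H F w m U → y ∉ extNbhd H U := by
  obtain ⟨C, huC, hC, hmax⟩ := hle.exists_maximal_isCritical hlarge u
  -- Otherwise adding `u` to `C` raises the demand by `w u > 0` but adds no free neighbour.
  by_contra! h
  have hsub : extNbhd H (insert u C) \ F ⊆ extNbhd H C \ F := by
    intro v hv
    obtain ⟨⟨hvC, x, hx, hxv⟩, hvF⟩ := by simpa only [mem_sdiff, mem_extNbhd] using hv
    have hvC' : v ∉ C := fun h => hvC (mem_insert_of_mem h)
    refine mem_sdiff.2 ⟨(mem_extNbhd H).2 ⟨hvC', ?_⟩, hvF⟩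
    rcases mem_insert.1 hx with rfl | hx
    · have hvu : v ∈ extNbhd H {x} \ F := by
        simpa [mem_extNbhd, hvF] using ⟨fun h => hvC (h ▸ mem_insert_self _ _), hxv⟩
      obtain ⟨U, huU, hU, hvU⟩ := h v hvu
      obtain ⟨-, z, hz, hzv⟩ := (mem_extNbhd H).1 hvU
      exact ⟨z, hmax U huU hU hz, hzv⟩
    · exact ⟨x, hx, hxv⟩
  have hins := hle (insert u C) ((card_insert_le u C).trans (by have := hC.card_le hlarge; omega))
  rw [sum_insert huC, hC.2] at hins
  have := card_le_card hsub
  omega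

lemma DemandMet.insert (hle : DemandMet H F w m) {w' : V → ℕ} (hw : ∀ v, w' v ≤ w v) {u y : V}
    (hu : w' u < w u) (hyF : y ∉ F)
    (hy : ∀ U, u ∉ U → IsCritical H F w m U → y ∉ extNbhd H U) :
    DemandMet H (insert y F) w' m := by
  intro U hU
  have hsum : ∑ v ∈ U, w' v ≤ ∑ v ∈ U, w v := sum_le_sum fun v _ => hw v
  have hleU := hle U hU
  rw [sdiff_insert]
  by_cases hyU : y ∈ extNbhd H U
  · rw [card_erase_of_mem (mem_sdiff.2 ⟨hyU, hyF⟩)]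
    by_cases huU : u ∈ U
    · have := sum_lt_sum (fun v _ => hw v) ⟨u, huU, hu⟩
      omega
    · have hne : ∑ v ∈ U, w v ≠ #(extNbhd H U \ F) := fun h => hy U huU ⟨hU, h⟩ hyU
      omega
  · rw [erase_eq_of_notMem fun h => hyU (mem_sdiff.1 h).1]
    exact hsum.trans hleU

end Critical

variable {V γ : Type*} [Fintype γ] {H : SimpleGraph V} {T : SimpleGraph γ}
  {d m : ℕ} {S : Finset γ} {f : γ → V} {r s t tp : γ} {y : V}

noncomputable def remDeg (T : SimpleGraph γ) (S : Finset γ) (s : γ) : ℕ :=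
  #(T.neighborFinset s \ S)

lemma remDeg_le_degree (S : Finset γ) (s : γ) : remDeg T S s ≤ T.degree s :=
  (card_le_card sdiff_subset).trans_eq (T.card_neighborFinset_eq_degree s)

lemma remDeg_anti {S S' : Finset γ} (h : S ⊆ S') (s : γ) : remDeg T S' s ≤ remDeg T S s :=
  card_le_card (sdiff_subset_sdiff subset_rfl h)

lemma remDeg_insert_lt (hst : T.Adj s t) (ht : t ∉ S) : remDeg T (insert t S) s < remDeg T S s := by
  rw [remDeg, remDeg, sdiff_insert]
  exact card_erase_lt_of_mem (by simp [hst, ht])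

-- Once `f` is injective on `S`, the chosen preimage is the only one.
noncomputable def demand (T : SimpleGraph γ) (d : ℕ) (S : Finset γ) (f : γ → V) (v : V) : ℕ :=
  if h : v ∈ S.image f then remDeg T S (mem_image.1 h).choose else d

lemma demand_apply_of_mem (hf : Set.InjOn f S) (hs : s ∈ S) :
    demand T d S f (f s) = remDeg T S s := by
  have h : f s ∈ S.image f := mem_image_of_mem f hs
  obtain ⟨hs', hfs'⟩ := (mem_image.1 h).choose_spec
  rw [demand, dif_pos h, hf hs' hs hfs']

lemma demand_of_notMem {v : V} (hv : v ∉ S.image f) : demand T d S f v = d :=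
  dif_neg hv

lemma demand_le (hdeg : ∀ s, T.degree s ≤ d) (v : V) : demand T d S f v ≤ d := by
  unfold demand
  split_ifs
  exacts [(remDeg_le_degree S _).trans (hdeg _), le_rfl]

lemma sum_demand_le (hdeg : ∀ s, T.degree s ≤ d) (U : Finset V) :
    ∑ v ∈ U, demand T d S f v ≤ d * #U := by
  simpa [mul_comm] using sum_le_card_nsmul U _ d fun v _ => demand_le hdeg v

lemma demandMetStrictlyAbove_of_card_lt [Fintype V] (hdeg : ∀ s, T.degree s ≤ d) {M : ℕ}
    (h2 : ∀ U : Finset V, m < #U → #U ≤ 2 * m → d * #U + M ≤ #(extNbhd H U)) (hSM : #S < M) :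
    DemandMetStrictlyAbove H (S.image f) (demand T d S f) m := by
  intro U hmU hU
  have := sum_demand_le (S := S) (f := f) hdeg U
  have := h2 U hmU hU
  have := card_le_card_sdiff_add_card (s := extNbhd H U) (t := S.image f)
  have := card_image_le (s := S) (f := f)
  omega

lemma demand_insert_update_le (hdeg : ∀ s, T.degree s ≤ d) (hf : Set.InjOn f S) (ht : t ∉ S)
    (hy : y ∉ S.image f) (v : V) :
    demand T d (insert t S) (Function.update f t y) v ≤ demand T d S f v := by
  by_cases hv : v ∈ S.image f
  · obtain ⟨s, hs, rfl⟩ := mem_image.1 hv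
    have hfs : Function.update f t y s = f s :=
      Function.update_of_ne (ne_of_mem_of_not_mem hs ht) y f
    rw [← hfs, demand_apply_of_mem (hf.update_insert ht hy) (mem_insert_of_mem hs), hfs,
      demand_apply_of_mem hf hs]
    exact remDeg_anti (subset_insert t S) s
  · rw [demand_of_notMem hv]
    exact demand_le hdeg v

lemma demand_insert_update_lt (hf : Set.InjOn f S) (ht : t ∉ S) (htp : tp ∈ S)
    (hadj : T.Adj tp t) (hy : y ∉ S.image f) :
    demand T d (insert t S) (Function.update f t y) (f tp) < demand T d S f (f tp) := by
  have hfs : Function.update f t y tp = f tp :=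
    Function.update_of_ne (ne_of_mem_of_not_mem htp ht) y f
  rw [← hfs, demand_apply_of_mem (hf.update_insert ht hy) (mem_insert_of_mem htp), hfs,
    demand_apply_of_mem hf htp]
  exact remDeg_insert_lt hadj ht

variable [Fintype V]

structure IsGood (H : SimpleGraph V) (T : SimpleGraph γ) (d m : ℕ) (r : γ) (S : Finset γ)
    (f : γ → V) : Prop where
  root_mem : r ∈ S
  injOn : Set.InjOn f S
  map_adj : ∀ ⦃a b⦄, a ∈ S → b ∈ S → T.Adj a b → H.Adj (f a) (f b)
  walk_to_root : ∀ a ∈ S, ∃ p : T.Walk a r, ∀ x ∈ p.support, x ∈ S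
  demandMet : DemandMet H (S.image f) (demand T d S f) m

lemma isGood_singleton (hdeg : ∀ s, T.degree s ≤ d)
    (hN : ∀ U : Finset V, 0 < #U → #U ≤ 2 * m → d * #U + 1 ≤ #(extNbhd H U)) (r : γ) (v₀ : V) :
    IsGood H T d m r {r} fun _ => v₀ where
  root_mem := mem_singleton_self r
  injOn := by simp
  map_adj a b ha hb hab := by
    rw [mem_singleton] at ha hb
    exact absurd (ha.trans hb.symm) hab.ne
  walk_to_root a ha := by
    obtain rfl := mem_singleton.1 ha
    exact ⟨Walk.nil, by simp⟩
  demandMet U hU := by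
    rcases U.eq_empty_or_nonempty with rfl | hne
    · simp
    have := hN U hne.card_pos hU
    have := sum_demand_le (S := {r}) (f := fun _ => v₀) hdeg U
    have := card_le_card_sdiff_add_card (s := extNbhd H U) (t := ({r} : Finset γ).image fun _ => v₀)
    simp only [image_singleton, card_singleton] at this ⊢
    omega

lemma IsGood.eq_of_adj (hT : T.IsAcyclic) (hg : IsGood H T d m r S f) {t a b : γ} (ht : t ∉ S)
    (ha : a ∈ S) (hb : b ∈ S) (hta : T.Adj t a) (htb : T.Adj t b) : a = b := by
  obtain ⟨p, hp⟩ := hg.walk_to_root a ha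
  obtain ⟨q, hq⟩ := hg.walk_to_root b hb
  refine hT.eq_of_adj_of_notMem_support hta htb (q.append p.reverse) fun h => ht ?_
  rcases (Walk.mem_support_append_iff _ _).1 h with h | h
  exacts [hq t h, hp t (by simpa using h)]

lemma IsGood.insert_update (hT : T.IsAcyclic) (hg : IsGood H T d m r S f) {t tp : γ} {y : V}
    (ht : t ∉ S) (htp : tp ∈ S) (hadj : T.Adj tp t) (hy : H.Adj (f tp) y) (hyF : y ∉ S.image f)
    (hdem : DemandMet H (insert y (S.image f))
      (demand T d (insert t S) (Function.update f t y)) m) :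
    IsGood H T d m r (insert t S) (Function.update f t y) where
  root_mem := mem_insert_of_mem hg.root_mem
  injOn := hg.injOn.update_insert ht hyF
  map_adj a b ha hb hab := by
    have hupd : ∀ s ∈ S, Function.update f t y s = f s := fun s hs =>
      Function.update_of_ne (ne_of_mem_of_not_mem hs ht) y f
    obtain rfl | haS := mem_insert.1 ha <;> obtain rfl | hbS := mem_insert.1 hb
    · exact absurd rfl hab.ne
    · obtain rfl := hg.eq_of_adj hT ht hbS htp hab hadj.symm
      rw [Function.update_self, hupd _ hbS]
      exact hy.symm
    · obtain rfl := hg.eq_of_adj hT ht haS htp hab.symm hadj.symm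
      rw [Function.update_self, hupd _ haS]
      exact hy
    · rw [hupd a haS, hupd b hbS]
      exact hg.map_adj haS hbS hab
  walk_to_root a ha := by
    rcases mem_insert.1 ha with rfl | ha
    · obtain ⟨p, hp⟩ := hg.walk_to_root tp htp
      refine ⟨Walk.cons hadj.symm p, fun x hx => ?_⟩
      rcases List.mem_cons.1 (Walk.support_cons _ _ ▸ hx) with rfl | hx
      exacts [mem_insert_self _ _, mem_insert_of_mem (hp x hx)]
    · obtain ⟨p, hp⟩ := hg.walk_to_root a ha
      exact ⟨p, fun x hx => mem_insert_of_mem (hp x hx)⟩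
  demandMet := image_insert_update f y ht ▸ hdem

lemma IsGood.exists_insert (hT : T.IsTree) (hdeg : ∀ s, T.degree s ≤ d) (hm : 0 < m)
    (h2 : ∀ U : Finset V, m < #U → #U ≤ 2 * m → d * #U + Fintype.card γ ≤ #(extNbhd H U))
    (hg : IsGood H T d m r S f) (hS : #S < Fintype.card γ) :
    ∃ t ∉ S, ∃ y, IsGood H T d m r (insert t S) (Function.update f t y) := by
  obtain ⟨b, -, hb⟩ := exists_mem_notMem_of_card_lt_card (t := univ) hS
  obtain ⟨tp, htp, t, ht, hadj⟩ := hT.connected.exists_adj_mem_notMem (S := (S : Set γ))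
    (mem_coe.2 hg.root_mem) (b := b) (by simpa using hb)
  have hu : 0 < demand T d S f (f tp) := by
    rw [demand_apply_of_mem hg.injOn htp]
    exact Nat.zero_lt_of_lt (remDeg_insert_lt hadj ht)
  obtain ⟨y, hyN, hyC⟩ := hg.demandMet.exists_mem_extNbhd_singleton_notMem_extNbhd_isCritical
    (demandMetStrictlyAbove_of_card_lt hdeg h2 hS) hm hu
  obtain ⟨hyN, hyF⟩ := mem_sdiff.1 hyN
  have hy : H.Adj (f tp) y := by
    simp only [mem_extNbhd, mem_singleton, exists_eq_left] at hyN
    exact hyN.2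
  refine ⟨t, ht, y, hg.insert_update hT.isAcyclic ht htp hadj hy hyF ?_⟩
  exact hg.demandMet.insert (demand_insert_update_le hdeg hg.injOn ht hyF)
    (demand_insert_update_lt hg.injOn ht htp hadj hyF) hyF hyC

lemma IsGood.exists_univ (hT : T.IsTree) (hdeg : ∀ s, T.degree s ≤ d) (hm : 0 < m)
    (h2 : ∀ U : Finset V, m < #U → #U ≤ 2 * m → d * #U + Fintype.card γ ≤ #(extNbhd H U))
    (hg : IsGood H T d m r S f) : ∃ g, IsGood H T d m r univ g := by
  induction h : Fintype.card γ - #S generalizing S f with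
  | zero =>
    have hS : S = univ := eq_univ_of_card S (by have := card_le_univ S; omega)
    exact ⟨f, hS ▸ hg⟩
  | succ n ih =>
    obtain ⟨t, ht, y, hg'⟩ := hg.exists_insert hT hdeg hm h2 (by omega)
    exact ih hg' (by rw [card_insert_of_notMem ht]; omega)

end Haxell

theorem tree_embedding_haxell_general {V : Type*} [Fintype V] [Nonempty V]
    (d m M : ℕ) (hm : 0 < m)
    (H : SimpleGraph V)
    (h1 : ∀ U : Finset V, 0 < U.card → U.card ≤ m →
      (extNbhd H U).card ≥ d * U.card + 1)
    (h2 : ∀ U : Finset V, m < U.card → U.card ≤ 2 * m →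
      (extNbhd H U).card ≥ d * U.card + M)
    {γ : Type*} [Fintype γ] (T : SimpleGraph γ) (hT : T.IsTree)
    (hTcard : Fintype.card γ = M)
    (hTdeg : ∀ v : γ, (T.neighborSet v).ncard ≤ d) :
    ∃ f : γ → V, Function.Injective f ∧ ∀ a b : γ, T.Adj a b → H.Adj (f a) (f b) := by
  subst hTcard
  obtain ⟨r⟩ := hT.connected.nonempty
  obtain ⟨v₀⟩ := ‹Nonempty V›
  have hdeg : ∀ s, T.degree s ≤ d := fun s => by
    simpa only [← coe_neighborFinset, Set.ncard_coe_finset, card_neighborFinset_eq_degree]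
      using hTdeg s
  have hN : ∀ U : Finset V, 0 < #U → #U ≤ 2 * m → d * #U + 1 ≤ #(extNbhd H U) := by
    intro U hU hU2
    rcases le_or_gt #U m with hUm | hUm
    · exact h1 U hU hUm
    · have := h2 U hUm hU2
      have := Fintype.card_pos_iff.2 ⟨r⟩
      omega
  obtain ⟨f, hf⟩ := (Haxell.isGood_singleton hdeg hN r v₀).exists_univ hT hdeg hm h2
  exact ⟨f, Set.injOn_univ.1 (by simpa using hf.injOn),
    fun a b => hf.map_adj (mem_univ a) (mem_univ b)⟩

/-- Haxell's tree-embedding theorem: let `d, m, M` be positive integers, and let `H` be a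
non-empty graph such that (1) every `U ⊆ V(H)` with `0 < |U| ≤ m` has `|N_H(U)| ≥ d|U| + 1`,
and (2) every `U ⊆ V(H)` with `m < |U| ≤ 2m` has `|N_H(U)| ≥ d|U| + M`. Then `H` contains a
copy of every tree `T` with `M` vertices and maximum degree at most `d`. -/
theorem tree_embedding_haxell {V : Type*} [Fintype V] [Nonempty V]
    (d m M : ℕ) (hd : 0 < d) (hm : 0 < m) (hM : 0 < M)
    (H : SimpleGraph V)
    (h1 : ∀ U : Finset V, 0 < U.card → U.card ≤ m →
      (extNbhd H U).card ≥ d * U.card + 1)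
    (h2 : ∀ U : Finset V, m < U.card → U.card ≤ 2 * m →
      (extNbhd H U).card ≥ d * U.card + M)
    {γ : Type*} [Fintype γ] (T : SimpleGraph γ) (hT : T.IsTree)
    (hTcard : Fintype.card γ = M)
    (hTdeg : ∀ v : γ, (T.neighborSet v).ncard ≤ d) :
    ∃ f : γ → V, Function.Injective f ∧ ∀ a b : γ, T.Adj a b → H.Adj (f a) (f b) :=
  tree_embedding_haxell_general d m M hm H h1 h2 T hT hTcard hTdeg
end
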